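/- arXiv:2509.24847 — 5 statements merged into one kernel-verified Lean document; each statement's English description precedes it below -/
import Mathlib

section
/- With μ and Φ_v as above, the quantity ρ := -μ⁻¹ div_v(Φ_v μ), when written as a function on phase space, equals ρ = (Gⁱʲ - (1/2)vⁱvʲ) ∂_k G_{ij} v^k - ∂_j φ · v^j, i.e. ρ = tr(G⁻¹ ∂G/∂v) - (1/2) vᵀ(∂G/∂v)v - ⟨∇φ, v⟩ where ∂G/∂v is the directional derivative of G along v. -/
open Matrix

private lemma sum4 {n : ℕ} (f : Fin n → Fin n → Fin n → Fin n → ℝ) :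
    ∑ b, ∑ c, ∑ k, ∑ i, f b c k i = ∑ i, ∑ b, ∑ c, ∑ k, f b c k i := by
  calc ∑ b, ∑ c, ∑ k, ∑ i, f b c k i
      = ∑ b, ∑ c, ∑ i, ∑ k, f b c k i :=
        Finset.sum_congr rfl fun b _ => Finset.sum_congr rfl fun c _ => Finset.sum_comm
    _ = ∑ b, ∑ i, ∑ c, ∑ k, f b c k i :=
        Finset.sum_congr rfl fun b _ => Finset.sum_comm
    _ = ∑ i, ∑ b, ∑ c, ∑ k, f b c k i := Finset.sum_comm

private lemma swap23 {n : ℕ} (f : Fin n → Fin n → Fin n → ℝ) :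
    ∑ a, ∑ b, ∑ c, f a b c = ∑ a, ∑ c, ∑ b, f a b c :=
  Finset.sum_congr rfl fun _ _ => Finset.sum_comm

private lemma swap12 {n : ℕ} (f : Fin n → Fin n → Fin n → ℝ) :
    ∑ a, ∑ b, ∑ c, f a b c = ∑ b, ∑ a, ∑ c, f a b c :=
  Finset.sum_comm

private lemma swap13 {n : ℕ} (f : Fin n → Fin n → Fin n → ℝ) :
    ∑ a, ∑ b, ∑ c, f a b c = ∑ c, ∑ b, ∑ a, f a b c := by
  rw [swap23, swap12, swap23]

/-- The rate `ρ := -μ⁻¹ div_v(Φ_v μ)` of the split Lagrangian dynamics equals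
`(Gⁱʲ - ½ vⁱvʲ) ∂_k G_{ij} v^k - ∂_j φ · v^j`, i.e.
`ρ = tr(G⁻¹ ∂G/∂v) - ½ vᵀ(∂G/∂v)v - ⟨∇φ, v⟩`. -/
theorem stmt8 (d : ℕ) (G : (Fin d → ℝ) → Matrix (Fin d) (Fin d) ℝ)
    (hGsmooth : ∀ i k, ContDiff ℝ (⊤ : ℕ∞) (fun x => G x i k))
    (hGsymm : ∀ x, (G x).IsSymm) (hGpd : ∀ x, (G x).PosDef)
    (π : (Fin d → ℝ) → ℝ) (hπ : ContDiff ℝ (⊤ : ℕ∞) π) (hπpos : ∀ x, 0 < π x)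
    (φ : (Fin d → ℝ) → ℝ) (hφ : ContDiff ℝ (⊤ : ℕ∞) φ)
    (μ : (Fin d → ℝ) → (Fin d → ℝ) → ℝ)
    (hμ : ∀ x v, μ x v = π x * (2 * Real.pi) ^ (-(d : ℝ) / 2)
        * Real.sqrt (G x).det * Real.exp (-(v ⬝ᵥ G x *ᵥ v) / 2))
    (x v : Fin d → ℝ)
    (dG : Fin d → Fin d → Fin d → ℝ)
    (hdG : ∀ j i k, dG j i k = fderiv ℝ (fun y => G y i k) x (Pi.single j 1))
    (Γ : Fin d → Fin d → Fin d → ℝ)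
    (hΓ : ∀ a b c, Γ a b c
      = (1 / 2) * ∑ e, (G x)⁻¹ a e * (dG b c e + dG c b e - dG e b c))
    (Φ : (Fin d → ℝ) → (Fin d → ℝ))
    (hΦ : ∀ w a, Φ w a = -(∑ b, ∑ c, Γ a b c * w b * w c)
        - ∑ b, (G x)⁻¹ a b * fderiv ℝ φ x (Pi.single b 1))
    (ρ : ℝ)
    (hρ : ρ = -(μ x v)⁻¹
        * (∑ i, fderiv ℝ (fun w => Φ w i * μ x w) v (Pi.single i 1))) :
    ρ = ∑ i, ∑ j, ∑ k, ((G x)⁻¹ i j - (1 / 2) * v i * v j) * dG k i j * v k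
        - ∑ j, fderiv ℝ φ x (Pi.single j 1) * v j := by
  classical
  set g : Matrix (Fin d) (Fin d) ℝ := G x with hg
  set gi : Matrix (Fin d) (Fin d) ℝ := (G x)⁻¹ with hgi
  set C : ℝ := π x * (2 * Real.pi) ^ (-(d : ℝ) / 2) * Real.sqrt (G x).det with hCdef
  -- symmetry facts
  have hgs : ∀ a b, g a b = g b a := fun a b => ((hGsymm x).apply a b).symm
  have hgis : ∀ a b, gi a b = gi b a := by
    have h1 : ((G x)⁻¹).IsSymm := by
      unfold Matrix.IsSymm
      rw [Matrix.transpose_nonsing_inv, (hGsymm x)]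
    exact fun a b => (h1.apply a b).symm
  have hinv : ∀ a b, (∑ e, gi a e * g e b) = if a = b then 1 else 0 := by
    intro a b
    have h1 : (G x)⁻¹ * G x = 1 :=
      Matrix.nonsing_inv_mul (G x) (isUnit_iff_ne_zero.2 (hGpd x).det_pos.ne')
    have := congrFun (congrFun h1 a) b
    simpa [Matrix.mul_apply, Matrix.one_apply] using this
  have hdGsym : ∀ j a b, dG j a b = dG j b a := by
    intro j a b
    rw [hdG, hdG]
    congr 2
    funext y
    exact ((hGsymm y).apply a b).symm
  have hΓsym : ∀ a b c, Γ a b c = Γ a c b := by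
    intro a b c
    rw [hΓ, hΓ]
    congr 1
    refine Finset.sum_congr rfl fun e _ => ?_
    rw [hdGsym e b c]
    ring
  -- value of μ at (x, v)
  have hμv : μ x v = C * Real.exp ((-∑ j, v j * ∑ k, g j k * v k) * (2:ℝ)⁻¹) := by
    have harg : -(v ⬝ᵥ G x *ᵥ v) / 2 = (-∑ j, v j * ∑ k, g j k * v k) * (2:ℝ)⁻¹ := by
      simp [dotProduct, mulVec, hg, div_eq_mul_inv]
    rw [hμ, harg]
  have hμpos : 0 < μ x v := by
    rw [hμv]
    have h1 : 0 < C := by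
      apply mul_pos (mul_pos (hπpos x) _) _
      · exact Real.rpow_pos_of_pos (by positivity) _
      · exact Real.sqrt_pos.2 (hGpd x).det_pos
    positivity
  -- key derivative computation
  have key : ∀ i, fderiv ℝ (fun w => Φ w i * μ x w) v (Pi.single i 1)
      = μ x v * (Φ v i * ((2:ℝ)⁻¹ * -((∑ b, v b * g b i) + ∑ k, g i k * v k))
          + -((∑ b, Γ i b i * v b) + ∑ c, v c * Γ i i c)) := by
    intro i
    have hfun : (fun w => Φ w i * μ x w) = fun w : Fin d → ℝ =>
        (-(∑ b, ∑ c, Γ i b c * w b * w c) - ∑ b, gi i b * (fderiv ℝ φ x (Pi.single b 1))) *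
          (C * Real.exp ((-∑ j, w j * ∑ k, g j k * w k) * (2:ℝ)⁻¹)) := by
      funext w
      have harg : -(w ⬝ᵥ G x *ᵥ w) / 2 = (-∑ j, w j * ∑ k, g j k * w k) * (2:ℝ)⁻¹ := by
        simp [dotProduct, mulVec, hg, div_eq_mul_inv]
      rw [hΦ, hμ, harg]
    rw [hfun]
    have hF := (((HasFDerivAt.fun_sum (u := Finset.univ) fun (b : Fin d) _ =>
        HasFDerivAt.fun_sum (u := Finset.univ) fun (c : Fin d) _ =>
        ((hasFDerivAt_apply (𝕜 := ℝ) b v).const_mul (Γ i b c)).fun_mul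
          (hasFDerivAt_apply (𝕜 := ℝ) c v)).fun_neg.sub_const (∑ b, gi i b * (fderiv ℝ φ x (Pi.single b 1)))).fun_mul
      (((((HasFDerivAt.fun_sum (u := Finset.univ) fun (j : Fin d) _ =>
        (hasFDerivAt_apply (𝕜 := ℝ) j v).fun_mul
        (HasFDerivAt.fun_sum (u := Finset.univ) fun (k : Fin d) _ =>
          (hasFDerivAt_apply (𝕜 := ℝ) k v).const_mul (g j k))).fun_neg).mul_const
          ((2:ℝ)⁻¹)).exp).const_mul C))
    rw [hF.fderiv]
    simp only [ContinuousLinearMap.add_apply, ContinuousLinearMap.smul_apply,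
      ContinuousLinearMap.coe_sum', Finset.sum_apply, ContinuousLinearMap.neg_apply,
      ContinuousLinearMap.proj_apply, ContinuousLinearMap.coe_smul', Pi.smul_apply,
      smul_eq_mul, Pi.single_apply, mul_ite, mul_one, mul_zero, ite_mul, one_mul,
      zero_mul, Finset.sum_ite_eq, Finset.sum_ite_eq', Finset.mem_univ, if_true,
      Finset.sum_add_distrib]
    rw [show (∑ x : Fin d, ∑ x_1 : Fin d, if x = i then v x_1 * Γ i x x_1 else 0)
        = ∑ c, v c * Γ i i c from by rw [Finset.sum_comm]; simp]
    rw [hΦ, hμv]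
    ring
  -- reduce ρ to the sum of the D i
  have hρ2 : ρ = ∑ i, (Φ v i * ((2:ℝ)⁻¹ * ((∑ b, v b * g b i) + ∑ k, g i k * v k))
      + ((∑ b, Γ i b i * v b) + ∑ c, v c * Γ i i c)) := by
    rw [hρ, Finset.sum_congr rfl fun i _ => key i, ← Finset.mul_sum]
    rw [neg_mul, ← mul_assoc, inv_mul_cancel₀ hμpos.ne', one_mul, ← Finset.sum_neg_distrib]
    refine Finset.sum_congr rfl fun i _ => by ring
  -- canonical atoms
  -- Step: per-i simplifications
  have e1 : ∀ i, (2:ℝ)⁻¹ * ((∑ b, v b * g b i) + ∑ k, g i k * v k) = ∑ k, g i k * v k := by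
    intro i
    have h1 : (∑ b, v b * g b i) = ∑ k, g i k * v k :=
      Finset.sum_congr rfl fun b _ => by rw [hgs b i]; ring
    rw [h1]; ring
  have e2 : ∀ i, ((∑ b, Γ i b i * v b) + ∑ c, v c * Γ i i c) = 2 * ∑ c, Γ i i c * v c := by
    intro i
    have h1 : (∑ b, Γ i b i * v b) = ∑ c, Γ i i c * v c :=
      Finset.sum_congr rfl fun b _ => by rw [hΓsym i b i]
    have h2 : (∑ c, v c * Γ i i c) = ∑ c, Γ i i c * v c :=
      Finset.sum_congr rfl fun c _ => mul_comm _ _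
    rw [h1, h2]; ring
  have hρ3 : ρ = ∑ i, (Φ v i * ∑ k, g i k * v k) + ∑ i, 2 * ∑ c, Γ i i c * v c := by
    rw [hρ2, ← Finset.sum_add_distrib]
    exact Finset.sum_congr rfl fun i _ => by rw [e1 i, e2 i]
  -- the pure-Christoffel piece
  have P1 : (∑ i, 2 * ∑ c, Γ i i c * v c) = ∑ i, ∑ j, ∑ k, gi i j * dG k i j * v k := by
    have h0 : (∑ i, 2 * ∑ c, Γ i i c * v c)
        = ∑ i, ∑ c, ∑ e, (gi i e * dG i c e * v c + gi i e * dG c i e * v c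
            - gi i e * dG e i c * v c) := by
      refine Finset.sum_congr rfl fun i _ => ?_
      rw [Finset.mul_sum]
      refine Finset.sum_congr rfl fun c _ => ?_
      rw [hΓ, show (2:ℝ) * (1 / 2 * (∑ e, gi i e * (dG i c e + dG c i e - dG e i c)) * v c)
          = (∑ e, gi i e * (dG i c e + dG c i e - dG e i c)) * v c from by ring,
        Finset.sum_mul]
      exact Finset.sum_congr rfl fun e _ => by ring
    have h13 : (∑ i, ∑ c, ∑ e, gi i e * dG i c e * v c)
        = ∑ i, ∑ c, ∑ e, gi i e * dG e i c * v c := by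
      rw [swap13 fun i c e => gi i e * dG e i c * v c]
      refine Finset.sum_congr rfl fun i _ => Finset.sum_congr rfl fun c _ =>
        Finset.sum_congr rfl fun e _ => ?_
      rw [hgis e i, hdGsym i e c]
    have h2 : (∑ i, ∑ c, ∑ e, gi i e * dG c i e * v c)
        = ∑ i, ∑ j, ∑ k, gi i j * dG k i j * v k := by
      rw [swap23 fun i c e => gi i e * dG c i e * v c]
    rw [h0]
    simp only [Finset.sum_add_distrib, Finset.sum_sub_distrib]
    rw [h13, h2]
    ring
  -- the inverse-collapse lemma
  have hGam : ∀ b c k, (∑ i, Γ i b c * g i k)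
      = 1 / 2 * (dG b c k + dG c b k - dG k b c) := by
    intro b c k
    calc (∑ i, Γ i b c * g i k)
        = ∑ i, ∑ e, 1 / 2 * ((dG b c e + dG c b e - dG e b c) * (gi e i * g i k)) := by
          refine Finset.sum_congr rfl fun i _ => ?_
          rw [hΓ, Finset.mul_sum, Finset.sum_mul]
          refine Finset.sum_congr rfl fun e _ => ?_
          rw [hgis i e]; ring
      _ = ∑ e, ∑ i, 1 / 2 * ((dG b c e + dG c b e - dG e b c) * (gi e i * g i k)) :=
          Finset.sum_comm
      _ = ∑ e, 1 / 2 * ((dG b c e + dG c b e - dG e b c) * ∑ i, gi e i * g i k) := by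
          refine Finset.sum_congr rfl fun e _ => ?_
          rw [Finset.mul_sum, Finset.mul_sum]
      _ = 1 / 2 * (dG b c k + dG c b k - dG k b c) := by
          simp only [hinv, mul_ite, mul_one, mul_zero, Finset.sum_ite_eq,
            Finset.sum_ite_eq', Finset.mem_univ, if_true]
  -- the potential piece
  have PK : (∑ i, (∑ b, gi i b * (fderiv ℝ φ x (Pi.single b 1))) * ∑ k, g i k * v k) = ∑ b, (fderiv ℝ φ x (Pi.single b 1)) * v b := by
    calc (∑ i, (∑ b, gi i b * (fderiv ℝ φ x (Pi.single b 1))) * ∑ k, g i k * v k)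
        = ∑ i, ∑ b, ∑ k, (gi i b * (fderiv ℝ φ x (Pi.single b 1))) * (g i k * v k) := by
          refine Finset.sum_congr rfl fun i _ => ?_
          rw [Finset.sum_mul]
          refine Finset.sum_congr rfl fun b _ => Finset.mul_sum _ _ _
      _ = ∑ b, ∑ k, ∑ i, (gi i b * (fderiv ℝ φ x (Pi.single b 1))) * (g i k * v k) := by
          rw [swap12 fun i b k => (gi i b * (fderiv ℝ φ x (Pi.single b 1))) * (g i k * v k)]
          exact Finset.sum_congr rfl fun b _ => Finset.sum_comm
      _ = ∑ b, ∑ k, ((fderiv ℝ φ x (Pi.single b 1)) * v k) * ∑ i, gi b i * g i k := by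
          refine Finset.sum_congr rfl fun b _ => Finset.sum_congr rfl fun k _ => ?_
          rw [Finset.mul_sum]
          refine Finset.sum_congr rfl fun i _ => by rw [hgis i b]; ring
      _ = ∑ b, (fderiv ℝ φ x (Pi.single b 1)) * v b := by
          simp only [hinv, mul_ite, mul_one, mul_zero, Finset.sum_ite_eq,
            Finset.mem_univ, if_true]
  -- the quadratic piece
  have PQ : (∑ i, (∑ b, ∑ c, Γ i b c * v b * v c) * ∑ k, g i k * v k)
      = ∑ i, ∑ j, ∑ k, 1 / 2 * v i * v j * dG k i j * v k := by
    have h0 : (∑ i, (∑ b, ∑ c, Γ i b c * v b * v c) * ∑ k, g i k * v k)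
        = ∑ b, ∑ c, ∑ k, (∑ i, Γ i b c * g i k) * (v b * v c * v k) := by
      calc (∑ i, (∑ b, ∑ c, Γ i b c * v b * v c) * ∑ k, g i k * v k)
          = ∑ i, ∑ b, ∑ c, ∑ k, (Γ i b c * g i k) * (v b * v c * v k) := by
            refine Finset.sum_congr rfl fun i _ => ?_
            rw [Finset.sum_mul]
            refine Finset.sum_congr rfl fun b _ => ?_
            rw [Finset.sum_mul]
            refine Finset.sum_congr rfl fun c _ => ?_
            rw [Finset.mul_sum]
            exact Finset.sum_congr rfl fun k _ => by ring
        _ = ∑ b, ∑ c, ∑ k, ∑ i, (Γ i b c * g i k) * (v b * v c * v k) :=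
            (sum4 fun b c k i => (Γ i b c * g i k) * (v b * v c * v k)).symm
        _ = ∑ b, ∑ c, ∑ k, (∑ i, Γ i b c * g i k) * (v b * v c * v k) :=
            Finset.sum_congr rfl fun b _ => Finset.sum_congr rfl fun c _ =>
              Finset.sum_congr rfl fun k _ => (Finset.sum_mul _ _ _).symm
    have h1 : (∑ b, ∑ c, ∑ k, (∑ i, Γ i b c * g i k) * (v b * v c * v k))
        = ∑ b, ∑ c, ∑ k, (1 / 2 * (dG b c k * (v b * v c * v k))
            + 1 / 2 * (dG c b k * (v b * v c * v k))
            - 1 / 2 * (dG k b c * (v b * v c * v k))) := by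
      refine Finset.sum_congr rfl fun b _ => Finset.sum_congr rfl fun c _ =>
        Finset.sum_congr rfl fun k _ => ?_
      rw [hGam b c k]; ring
    have hU1 : (∑ b, ∑ c, ∑ k, 1 / 2 * (dG b c k * (v b * v c * v k)))
        = ∑ i, ∑ j, ∑ k, 1 / 2 * v i * v j * dG k i j * v k := by
      rw [swap13 fun b c k => 1 / 2 * (dG b c k * (v b * v c * v k)),
        swap12 fun k c b => 1 / 2 * (dG b c k * (v b * v c * v k))]
      refine Finset.sum_congr rfl fun a _ => Finset.sum_congr rfl fun b _ =>
        Finset.sum_congr rfl fun c _ => ?_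
      ring
    have hU2 : (∑ b, ∑ c, ∑ k, 1 / 2 * (dG c b k * (v b * v c * v k)))
        = ∑ i, ∑ j, ∑ k, 1 / 2 * v i * v j * dG k i j * v k := by
      rw [swap23 fun b c k => 1 / 2 * (dG c b k * (v b * v c * v k))]
      refine Finset.sum_congr rfl fun a _ => Finset.sum_congr rfl fun b _ =>
        Finset.sum_congr rfl fun c _ => ?_
      ring
    have hU3 : (∑ b, ∑ c, ∑ k, 1 / 2 * (dG k b c * (v b * v c * v k)))
        = ∑ i, ∑ j, ∑ k, 1 / 2 * v i * v j * dG k i j * v k :=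
      Finset.sum_congr rfl fun a _ => Finset.sum_congr rfl fun b _ =>
        Finset.sum_congr rfl fun c _ => by ring
    rw [h0, h1]
    simp only [Finset.sum_add_distrib, Finset.sum_sub_distrib]
    rw [hU1, hU2, hU3]
    ring
  -- assemble the Φ-part
  have PΦ : (∑ i, Φ v i * ∑ k, g i k * v k)
      = -(∑ i, ∑ j, ∑ k, 1 / 2 * v i * v j * dG k i j * v k)
        - ∑ b, (fderiv ℝ φ x (Pi.single b 1)) * v b := by
    have h0 : ∀ i, Φ v i * ∑ k, g i k * v k
        = (∑ b, ∑ c, Γ i b c * v b * v c) * (∑ k, g i k * v k) * (-1)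
          - (∑ b, gi i b * fderiv ℝ φ x (Pi.single b 1)) * ∑ k, g i k * v k := by
      intro i; rw [hΦ]; ring
    rw [Finset.sum_congr rfl fun i _ => h0 i]
    rw [Finset.sum_sub_distrib]
    have h1 : (∑ i, (∑ b, ∑ c, Γ i b c * v b * v c) * (∑ k, g i k * v k) * (-1))
        = -(∑ i, (∑ b, ∑ c, Γ i b c * v b * v c) * ∑ k, g i k * v k) := by
      rw [← Finset.sum_neg_distrib]
      exact Finset.sum_congr rfl fun i _ => by ring
    rw [h1, PQ, PK]
  rw [hρ3, P1, PΦ]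
  have hRHS : (∑ i, ∑ j, ∑ k, (gi i j - 1 / 2 * v i * v j) * dG k i j * v k)
      = (∑ i, ∑ j, ∑ k, gi i j * dG k i j * v k)
        - ∑ i, ∑ j, ∑ k, 1 / 2 * v i * v j * dG k i j * v k := by
    simp only [← Finset.sum_sub_distrib]
    exact Finset.sum_congr rfl fun a _ => Finset.sum_congr rfl fun b _ =>
      Finset.sum_congr rfl fun c _ => by ring
  rw [hRHS]
  ring
end

section
/- In the Split Lagrangian PDMP, where φ = -log π + (1/2) log det G, the rate function ρ = -μ⁻¹ div_v(Φ_v μ) simplifies to ρ = (1/2)(Gⁱʲ - vⁱvʲ) ∂_k G_{ij} v^k + ⟨∇log π, v⟩, i.e. ρ = (1/2)tr(G⁻¹ ∂G/∂v) - (1/2)vᵀ(∂G/∂v)v + ⟨∇log π, v⟩. -/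
open Matrix

lemma jacobi_hasFDerivAt {d : ℕ} {E : Type*} [NormedAddCommGroup E] [NormedSpace ℝ E]
    (M : E → Matrix (Fin d) (Fin d) ℝ) (x : E) (M' : Fin d → Fin d → E →L[ℝ] ℝ)
    (h : ∀ i j, HasFDerivAt (fun y => M y i j) (M' i j) x) :
    HasFDerivAt (fun y => (M y).det)
      (∑ σ : Equiv.Perm (Fin d), ((Equiv.Perm.sign σ : ℤ) : ℝ) •
        ∑ i, (∏ j ∈ Finset.univ.erase i, M x (σ j) j) • M' (σ i) i) x := by
  have hfun : (fun y => (M y).det)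
      = fun y => ∑ σ : Equiv.Perm (Fin d), ((Equiv.Perm.sign σ : ℤ) : ℝ) * ∏ i, M y (σ i) i := by
    funext y
    rw [Matrix.det_apply]
    refine Finset.sum_congr rfl fun σ _ => ?_
    rw [Units.smul_def, zsmul_eq_mul]
  rw [hfun]
  refine HasFDerivAt.fun_sum fun σ _ => ?_
  have hp : HasFDerivAt (fun y => ∏ i, M y (σ i) i)
      (∑ i, (∏ j ∈ Finset.univ.erase i, M x (σ j) j) • M' (σ i) i) x :=
    HasFDerivAt.finset_prod (fun i _ => h (σ i) i)
  simpa [smul_smul] using hp.const_mul ((Equiv.Perm.sign σ : ℤ) : ℝ)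


lemma det_deriv_eval {d : ℕ} (A H : Matrix (Fin d) (Fin d) ℝ) (hA : IsUnit A.det) :
    ∑ σ : Equiv.Perm (Fin d), ((Equiv.Perm.sign σ : ℤ) : ℝ) *
        ∑ i, (∏ j ∈ Finset.univ.erase i, A (σ j) j) * H (σ i) i
      = A.det * ∑ i, ∑ r, A⁻¹ i r * H r i := by
  have key : ∀ i, (A.updateCol i (fun r => H r i)).det
      = ∑ σ : Equiv.Perm (Fin d), ((Equiv.Perm.sign σ : ℤ) : ℝ) *
          ((∏ j ∈ Finset.univ.erase i, A (σ j) j) * H (σ i) i) := by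
    intro i
    rw [Matrix.det_apply]
    refine Finset.sum_congr rfl fun σ _ => ?_
    rw [Units.smul_def, zsmul_eq_mul]
    congr 1
    rw [← Finset.mul_prod_erase _ _ (Finset.mem_univ i), Matrix.updateCol_self, mul_comm]
    congr 1
    refine Finset.prod_congr rfl fun j hj => ?_
    rw [Matrix.updateCol_apply, if_neg (Finset.ne_of_mem_erase hj)]
  have hadj : A.adjugate = A.det • A⁻¹ := by
    rw [Matrix.inv_def, smul_smul, Ring.mul_inverse_cancel _ hA, one_smul]
  calc ∑ σ : Equiv.Perm (Fin d), ((Equiv.Perm.sign σ : ℤ) : ℝ) *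
        ∑ i, (∏ j ∈ Finset.univ.erase i, A (σ j) j) * H (σ i) i
      = ∑ i, ∑ σ : Equiv.Perm (Fin d), ((Equiv.Perm.sign σ : ℤ) : ℝ) *
          ((∏ j ∈ Finset.univ.erase i, A (σ j) j) * H (σ i) i) := by
        simp_rw [Finset.mul_sum]; rw [Finset.sum_comm]
    _ = ∑ i, (A.updateCol i (fun r => H r i)).det := by
        exact Finset.sum_congr rfl fun i _ => (key i).symm
    _ = ∑ i, ∑ r, A.adjugate i r * H r i := by
        refine Finset.sum_congr rfl fun i _ => ?_
        rw [← Matrix.cramer_apply, Matrix.cramer_eq_adjugate_mulVec]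
        rfl
    _ = A.det * ∑ i, ∑ r, A⁻¹ i r * H r i := by
        rw [Finset.mul_sum]
        refine Finset.sum_congr rfl fun i _ => ?_
        rw [Finset.mul_sum]
        refine Finset.sum_congr rfl fun r _ => ?_
        rw [hadj, Matrix.smul_apply, smul_eq_mul, mul_assoc]


/-- Split Lagrangian PDMP rate: with `φ = -log π + ½ log det G`, the rate
`ρ = -μ⁻¹ div_v(Φ_v μ)` simplifies to
`ρ = ½ (Gⁱʲ - vⁱvʲ) ∂_k G_{ij} v^k + ⟨∇ log π, v⟩`. -/
theorem stmt10 (d : ℕ) (G : (Fin d → ℝ) → Matrix (Fin d) (Fin d) ℝ)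
    (hGsmooth : ∀ i k, ContDiff ℝ (⊤ : ℕ∞) (fun x => G x i k))
    (hGsymm : ∀ x, (G x).IsSymm) (hGpd : ∀ x, (G x).PosDef)
    (π : (Fin d → ℝ) → ℝ) (hπ : ContDiff ℝ (⊤ : ℕ∞) π) (hπpos : ∀ x, 0 < π x)
    (φ : (Fin d → ℝ) → ℝ)
    (hφdef : ∀ y, φ y = -Real.log (π y) + (1 / 2) * Real.log (G y).det)
    (μ : (Fin d → ℝ) → (Fin d → ℝ) → ℝ)
    (hμ : ∀ x v, μ x v = π x * (2 * Real.pi) ^ (-(d : ℝ) / 2)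
        * Real.sqrt (G x).det * Real.exp (-(v ⬝ᵥ G x *ᵥ v) / 2))
    (x v : Fin d → ℝ)
    (dG : Fin d → Fin d → Fin d → ℝ)
    (hdG : ∀ j i k, dG j i k = fderiv ℝ (fun y => G y i k) x (Pi.single j 1))
    (Γ : Fin d → Fin d → Fin d → ℝ)
    (hΓ : ∀ a b c, Γ a b c
      = (1 / 2) * ∑ e, (G x)⁻¹ a e * (dG b c e + dG c b e - dG e b c))
    (Φ : (Fin d → ℝ) → (Fin d → ℝ))
    (hΦ : ∀ w a, Φ w a = -(∑ b, ∑ c, Γ a b c * w b * w c)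
        - ∑ b, (G x)⁻¹ a b * fderiv ℝ φ x (Pi.single b 1))
    (ρ : ℝ)
    (hρ : ρ = -(μ x v)⁻¹
        * (∑ i, fderiv ℝ (fun w => Φ w i * μ x w) v (Pi.single i 1))) :
    ρ = (1 / 2) * ∑ i, ∑ j, ∑ k, ((G x)⁻¹ i j - v i * v j) * dG k i j * v k
        + ∑ j, fderiv ℝ (fun y => Real.log (π y)) x (Pi.single j 1) * v j := by
  classical
  set Cμ : ℝ := π x * (2 * Real.pi) ^ (-(d : ℝ) / 2) * Real.sqrt (G x).det with hCμ
  have hQ : ∀ w : Fin d → ℝ, w ⬝ᵥ G x *ᵥ w = ∑ a, ∑ b, G x a b * w a * w b := by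
    intro w
    simp only [dotProduct, Matrix.mulVec, Finset.mul_sum]
    exact Finset.sum_congr rfl fun a _ => Finset.sum_congr rfl fun b _ => by ring
  set P : Fin d → ((Fin d → ℝ) →L[ℝ] ℝ) := fun a => ContinuousLinearMap.proj a with hP
  have hproj : ∀ a : Fin d, HasFDerivAt (fun w : Fin d → ℝ => w a) (P a) v :=
    fun a => hasFDerivAt_apply a v
  set K : Fin d → ℝ := fun b => fderiv ℝ φ x (Pi.single b 1) with hK
  have hstep : ∀ i, fderiv ℝ (fun w => Φ w i * μ x w) v (Pi.single i 1)
      = μ x v * ((-((∑ c, Γ i i c * v c) + (∑ b, Γ i b i * v b)))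
          - Φ v i * (∑ b, G x i b * v b)) := by
    intro i
    have hΦf : (fun w => Φ w i)
        = fun w => -(∑ b, ∑ c, Γ i b c * w b * w c) - ∑ b, (G x)⁻¹ i b * K b :=
      funext fun w => hΦ w i
    have hμf : (fun w => μ x w)
        = fun w => Cμ * Real.exp ((-(1/2) : ℝ) * ∑ a, ∑ b, G x a b * w a * w b) := by
      funext w
      rw [hμ, hQ, ← hCμ]
      congr 1
      ring
    have hΦd : HasFDerivAt (fun w => Φ w i)
        (-(∑ b, ∑ c, ((Γ i b c * v b) • P c
            + v c • ((Γ i b c) • P b)))) v := by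
      rw [hΦf]
      exact ((HasFDerivAt.fun_sum fun b _ => HasFDerivAt.fun_sum fun c _ =>
        (((hproj b).const_mul (Γ i b c)).fun_mul (hproj c))).neg).sub_const _
    have hQd : HasFDerivAt (fun w : Fin d → ℝ => ∑ a, ∑ b, G x a b * w a * w b)
        (∑ a, ∑ b, ((G x a b * v a) • P b
            + v b • ((G x a b) • ContinuousLinearMap.proj a))) v :=
      HasFDerivAt.fun_sum fun a _ => HasFDerivAt.fun_sum fun b _ =>
        (((hproj a).const_mul (G x a b)).fun_mul (hproj b))
    have hμd := (((hQd.const_mul ((-(1/2) : ℝ))).exp).const_mul Cμ)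
    rw [← hμf] at hμd
    have hfd := (hΦd.fun_mul hμd).fderiv
    rw [hfd]
    have hμv : μ x v = Cμ * Real.exp ((-(1/2) : ℝ) * ∑ a, ∑ b, G x a b * v a * v b) :=
      congrFun hμf v
    simp only [hP, ContinuousLinearMap.add_apply, ContinuousLinearMap.smul_apply,
      ContinuousLinearMap.coe_sum', Finset.sum_apply, ContinuousLinearMap.proj_apply,
      ContinuousLinearMap.neg_apply, smul_eq_mul, Pi.single_apply, mul_ite, ite_mul,
      mul_one, mul_zero, zero_mul, one_mul, Finset.sum_ite_eq, Finset.sum_ite_eq',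
      Finset.mem_univ, if_true, hμv]
    simp only [Finset.sum_add_distrib, Finset.sum_ite_irrel, Finset.sum_const_zero,
      Finset.sum_ite_eq, Finset.sum_ite_eq', Finset.mem_univ, if_true]
    have e1 : ∑ b, G x b i * v b = ∑ b, G x i b * v b :=
      Finset.sum_congr rfl fun b _ => by rw [(hGsymm x).apply b i]
    have e2 : ∑ b, v b * G x i b = ∑ b, G x i b * v b :=
      Finset.sum_congr rfl fun b _ => mul_comm _ _
    have e3 : ∑ c, v c * Γ i i c = ∑ c, Γ i i c * v c :=
      Finset.sum_congr rfl fun c _ => mul_comm _ _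
    rw [e1, e2, e3]
    ring
  -- basic symmetry / inverse facts
  have hdet0 : (G x).det ≠ 0 := ne_of_gt (hGpd x).det_pos
  have hGB : G x * (G x)⁻¹ = 1 := Matrix.mul_nonsing_inv _ (isUnit_iff_ne_zero.mpr hdet0)
  have hdelta : ∀ a b, ∑ i, G x i a * (G x)⁻¹ i b = if a = b then (1:ℝ) else 0 := by
    intro a b
    have h1 : (G x * (G x)⁻¹) a b = (1 : Matrix (Fin d) (Fin d) ℝ) a b := by rw [hGB]
    rw [Matrix.mul_apply] at h1
    rw [← Matrix.one_apply (i := a) (j := b), ← h1]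
    exact Finset.sum_congr rfl fun i _ => by rw [(hGsymm x).apply i a]
  have hBsym : ∀ i j, (G x)⁻¹ i j = (G x)⁻¹ j i := by
    intro i j
    have h1 : ((G x)⁻¹)ᵀ = (G x)⁻¹ := by
      rw [Matrix.transpose_nonsing_inv, (hGsymm x)]
    calc (G x)⁻¹ i j = ((G x)⁻¹)ᵀ j i := rfl
      _ = (G x)⁻¹ j i := by rw [h1]
  have hdGsym : ∀ k i j, dG k i j = dG k j i := by
    intro k i j
    rw [hdG, hdG]
    congr 2
    funext y
    exact ((hGsymm y).apply i j).symm
  have hΓsym : ∀ a b c, Γ a b c = Γ a c b := by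
    intro a b c
    rw [hΓ, hΓ]
    congr 1
    refine Finset.sum_congr rfl fun e _ => ?_
    rw [hdGsym e b c]
    ring
  -- contraction of Christoffel symbols with the metric
  have hcontr : ∀ a b c, ∑ i, G x i a * Γ i b c
      = (1/2) * (dG b c a + dG c b a - dG a b c) := by
    intro a b c
    calc ∑ i, G x i a * Γ i b c
        = ∑ i, ∑ e, ((1/2) * (dG b c e + dG c b e - dG e b c))
            * (G x i a * (G x)⁻¹ i e) := by
          refine Finset.sum_congr rfl fun i _ => ?_
          rw [hΓ, Finset.mul_sum, Finset.mul_sum]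
          exact Finset.sum_congr rfl fun e _ => by ring
      _ = ∑ e, ((1/2) * (dG b c e + dG c b e - dG e b c))
            * ∑ i, G x i a * (G x)⁻¹ i e := by
          rw [Finset.sum_comm]
          exact Finset.sum_congr rfl fun e _ => (Finset.mul_sum _ _ _).symm
      _ = (1/2) * (dG b c a + dG c b a - dG a b c) := by
          simp only [hdelta, mul_ite, mul_one, mul_zero]
          rw [Finset.sum_ite_eq Finset.univ a fun e => (1/2) * (dG b c e + dG c b e - dG e b c)]
          simp
  -- Jacobi's formula: value of fderiv φ
  set M' : Fin d → Fin d → ((Fin d → ℝ) →L[ℝ] ℝ) := fun i j => fderiv ℝ (fun y => G y i j) x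
    with hM'def
  have hM' : ∀ i j, HasFDerivAt (fun y => G y i j) (M' i j) x := fun i j =>
    (((hGsmooth i j).differentiable (by simp)) x).hasFDerivAt
  have hlogdet := (jacobi_hasFDerivAt G x M' hM').log hdet0
  have hlogπd : DifferentiableAt ℝ (fun y => Real.log (π y)) x :=
    (((hπ.differentiable (by simp)) x).log (ne_of_gt (hπpos x)))
  have hφd : HasFDerivAt φ (-(fderiv ℝ (fun y => Real.log (π y)) x)
      + (1/2 : ℝ) • (((G x).det)⁻¹ • (∑ σ : Equiv.Perm (Fin d), ((Equiv.Perm.sign σ : ℤ) : ℝ) •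
        ∑ i, (∏ j ∈ Finset.univ.erase i, G x (σ j) j) • M' (σ i) i))) x := by
    have h2 := (hlogπd.hasFDerivAt.neg).add (hlogdet.const_mul (1/2 : ℝ))
    have hfn : φ = fun y => -Real.log (π y) + (1/2 : ℝ) * Real.log (G y).det := funext hφdef
    rw [hfn]
    exact h2
  have hKval : ∀ b, K b = -(fderiv ℝ (fun y => Real.log (π y)) x (Pi.single b 1))
      + (1/2) * ∑ i, ∑ j, (G x)⁻¹ i j * dG b i j := by
    intro b
    have hDb : ∑ i, ∑ r, (G x)⁻¹ i r * dG b r i = ∑ i, ∑ j, (G x)⁻¹ i j * dG b i j := by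
      rw [Finset.sum_comm]
      refine Finset.sum_congr rfl fun i _ => Finset.sum_congr rfl fun j _ => ?_
      rw [hBsym j i]
    have hjac := det_deriv_eval (G x) (fun r c => dG b r c) (isUnit_iff_ne_zero.mpr hdet0)
    calc K b = fderiv ℝ φ x (Pi.single b 1) := rfl
      _ = -(fderiv ℝ (fun y => Real.log (π y)) x (Pi.single b 1))
          + (1/2) * (((G x).det)⁻¹ * ∑ σ : Equiv.Perm (Fin d), ((Equiv.Perm.sign σ : ℤ) : ℝ) *
            ∑ i, (∏ j ∈ Finset.univ.erase i, G x (σ j) j) * (M' (σ i) i (Pi.single b 1))) := by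
          rw [hφd.fderiv]
          simp [ContinuousLinearMap.add_apply, ContinuousLinearMap.neg_apply,
            ContinuousLinearMap.smul_apply, ContinuousLinearMap.coe_sum', Finset.sum_apply,
            smul_eq_mul, Finset.mul_sum]
      _ = -(fderiv ℝ (fun y => Real.log (π y)) x (Pi.single b 1))
          + (1/2) * ∑ i, ∑ j, (G x)⁻¹ i j * dG b i j := by
          congr 1
          rw [← hDb]
          have hMdG : ∀ (r c : Fin d), M' r c (Pi.single b 1) = dG b r c := fun r c =>
            (hdG b r c).symm
          simp only [hMdG]
          rw [hjac, ← mul_assoc ((G x).det)⁻¹, inv_mul_cancel₀ hdet0, one_mul]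
  -- nonvanishing of μ
  have hμne : μ x v ≠ 0 := by
    rw [hμ]
    have h1 : 0 < π x := hπpos x
    have h2 : (0:ℝ) < (2 * Real.pi) ^ (-(d : ℝ) / 2) :=
      Real.rpow_pos_of_pos (by positivity) _
    have h3 : 0 < Real.sqrt (G x).det := Real.sqrt_pos.mpr (hGpd x).det_pos
    positivity
  -- sum-reordering helper (cyclic)
  have scyc : ∀ (f : Fin d → Fin d → Fin d → ℝ),
      (∑ a, ∑ b, ∑ c, f a b c) = ∑ b, ∑ c, ∑ a, f a b c := by
    intro f
    rw [Finset.sum_comm]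
    exact Finset.sum_congr rfl fun b _ => Finset.sum_comm
  -- ρ as a sum
  have hsum : ρ = ∑ i, (Φ v i * ∑ b, G x i b * v b)
      + ∑ i, ((∑ c, Γ i i c * v c) + (∑ b, Γ i b i * v b)) := by
    rw [hρ]
    have h1 : ∑ i, fderiv ℝ (fun w => Φ w i * μ x w) v (Pi.single i 1)
        = μ x v * ∑ i, ((-(∑ c, Γ i i c * v c + ∑ b, Γ i b i * v b))
            - Φ v i * (∑ b, G x i b * v b)) := by
      rw [Finset.mul_sum]
      exact Finset.sum_congr rfl fun i _ => hstep i
    rw [h1, show ∀ S : ℝ, -(μ x v)⁻¹ * (μ x v * S) = -S from fun S => by field_simp]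
    rw [← Finset.sum_add_distrib, ← Finset.sum_neg_distrib]
    exact Finset.sum_congr rfl fun i _ => by ring
  -- split the Φ part
  have hsplit : ∑ i, (Φ v i * ∑ b, G x i b * v b)
      = -(∑ i, ((∑ b, ∑ c, Γ i b c * v b * v c) * ∑ b, G x i b * v b))
        - ∑ i, ((∑ b, (G x)⁻¹ i b * K b) * ∑ b, G x i b * v b) := by
    rw [← Finset.sum_neg_distrib, ← Finset.sum_sub_distrib]
    refine Finset.sum_congr rfl fun i _ => ?_
    rw [hΦ v i]
    ring
  -- Claim B : K-contraction
  have claimB : ∑ i, ((∑ b, (G x)⁻¹ i b * K b) * ∑ b, G x i b * v b)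
      = ∑ b, K b * v b := by
    calc ∑ i, ((∑ b, (G x)⁻¹ i b * K b) * ∑ b, G x i b * v b)
        = ∑ i, ∑ b, ∑ a, (K b * v a) * (G x i a * (G x)⁻¹ i b) := by
          refine Finset.sum_congr rfl fun i _ => ?_
          rw [Finset.sum_mul]
          refine Finset.sum_congr rfl fun b _ => ?_
          rw [Finset.mul_sum]
          exact Finset.sum_congr rfl fun a _ => by ring
      _ = ∑ b, ∑ a, (K b * v a) * ∑ i, G x i a * (G x)⁻¹ i b := by
          rw [Finset.sum_comm]
          refine Finset.sum_congr rfl fun b _ => ?_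
          rw [Finset.sum_comm]
          exact Finset.sum_congr rfl fun a _ => (Finset.mul_sum _ _ _).symm
      _ = ∑ b, K b * v b := by
          simp only [hdelta, mul_ite, mul_one, mul_zero]
          refine Finset.sum_congr rfl fun b _ => ?_
          rw [Finset.sum_ite_eq' Finset.univ b fun a => K b * v a]
          simp
  -- Claim C : cubic term
  have claimC : ∑ i, ((∑ b, ∑ c, Γ i b c * v b * v c) * ∑ b, G x i b * v b)
      = (1/2) * ∑ i, ∑ j, ∑ k, (v i * v j) * dG k i j * v k := by
    have step1 : ∑ i, ((∑ b, ∑ c, Γ i b c * v b * v c) * ∑ b, G x i b * v b)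
        = ∑ b, ∑ c, ∑ a, (v b * v c * v a) * ∑ i, G x i a * Γ i b c := by
      calc ∑ i, ((∑ b, ∑ c, Γ i b c * v b * v c) * ∑ b, G x i b * v b)
          = ∑ i, ∑ b, ∑ c, ∑ a, (v b * v c * v a) * (G x i a * Γ i b c) := by
            refine Finset.sum_congr rfl fun i _ => ?_
            rw [Finset.sum_mul]
            refine Finset.sum_congr rfl fun b _ => ?_
            rw [Finset.sum_mul]
            refine Finset.sum_congr rfl fun c _ => ?_
            rw [Finset.mul_sum]
            exact Finset.sum_congr rfl fun a _ => by ring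
        _ = ∑ b, ∑ i, ∑ c, ∑ a, (v b * v c * v a) * (G x i a * Γ i b c) := Finset.sum_comm
        _ = ∑ b, ∑ c, ∑ i, ∑ a, (v b * v c * v a) * (G x i a * Γ i b c) :=
            Finset.sum_congr rfl fun b _ => Finset.sum_comm
        _ = ∑ b, ∑ c, ∑ a, ∑ i, (v b * v c * v a) * (G x i a * Γ i b c) :=
            Finset.sum_congr rfl fun b _ => Finset.sum_congr rfl fun c _ => Finset.sum_comm
        _ = ∑ b, ∑ c, ∑ a, (v b * v c * v a) * ∑ i, G x i a * Γ i b c :=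
            Finset.sum_congr rfl fun b _ => Finset.sum_congr rfl fun c _ =>
              Finset.sum_congr rfl fun a _ => (Finset.mul_sum _ _ _).symm
    have step2 : ∑ b, ∑ c, ∑ a, (v b * v c * v a) * ∑ i, G x i a * Γ i b c
        = (1/2) * ((∑ b, ∑ c, ∑ a, (v b * v c * v a) * dG b c a)
            + (∑ b, ∑ c, ∑ a, (v b * v c * v a) * dG c b a)
            - ∑ b, ∑ c, ∑ a, (v b * v c * v a) * dG a b c) := by
      simp only [hcontr]
      calc ∑ b, ∑ c, ∑ a, (v b * v c * v a) * ((1/2) * (dG b c a + dG c b a - dG a b c))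
          = ∑ b, ∑ c, ∑ a, ((1/2) * ((v b * v c * v a) * dG b c a)
              + ((1/2) * ((v b * v c * v a) * dG c b a)
              - (1/2) * ((v b * v c * v a) * dG a b c))) :=
            Finset.sum_congr rfl fun b _ => Finset.sum_congr rfl fun c _ =>
              Finset.sum_congr rfl fun a _ => by ring
        _ = _ := by
            simp only [Finset.sum_add_distrib, Finset.sum_sub_distrib, ← Finset.mul_sum]
            ring
    have T3 : ∑ b, ∑ c, ∑ a, (v b * v c * v a) * dG a b c
        = ∑ i, ∑ j, ∑ k, (v i * v j) * dG k i j * v k :=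
      Finset.sum_congr rfl fun b _ => Finset.sum_congr rfl fun c _ =>
        Finset.sum_congr rfl fun a _ => by ring
    have T2 : ∑ b, ∑ c, ∑ a, (v b * v c * v a) * dG c b a
        = ∑ i, ∑ j, ∑ k, (v i * v j) * dG k i j * v k := by
      calc ∑ b, ∑ c, ∑ a, (v b * v c * v a) * dG c b a
          = ∑ b, ∑ a, ∑ c, (v b * v c * v a) * dG c b a :=
            Finset.sum_congr rfl fun b _ => Finset.sum_comm
        _ = ∑ i, ∑ j, ∑ k, (v i * v j) * dG k i j * v k :=
            Finset.sum_congr rfl fun i _ => Finset.sum_congr rfl fun j _ =>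
              Finset.sum_congr rfl fun k _ => by ring
    have T1 : ∑ b, ∑ c, ∑ a, (v b * v c * v a) * dG b c a
        = ∑ i, ∑ j, ∑ k, (v i * v j) * dG k i j * v k := by
      calc ∑ b, ∑ c, ∑ a, (v b * v c * v a) * dG b c a
          = ∑ c, ∑ a, ∑ b, (v b * v c * v a) * dG b c a := scyc _
        _ = ∑ i, ∑ j, ∑ k, (v i * v j) * dG k i j * v k :=
            Finset.sum_congr rfl fun i _ => Finset.sum_congr rfl fun j _ =>
              Finset.sum_congr rfl fun k _ => by ring
    rw [step1, step2, T1, T2, T3]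
    ring
  -- trace of Christoffel symbols
  have htr : ∀ c, ∑ i, Γ i i c = (1/2) * ∑ i, ∑ j, (G x)⁻¹ i j * dG c i j := by
    intro c
    have hswap : ∑ i, ∑ e, (G x)⁻¹ i e * dG i c e = ∑ i, ∑ e, (G x)⁻¹ i e * dG e i c := by
      rw [Finset.sum_comm]
      refine Finset.sum_congr rfl fun a _ => Finset.sum_congr rfl fun b _ => ?_
      rw [hBsym b a, hdGsym b c a]
    calc ∑ i, Γ i i c
        = ∑ i, ∑ e, ((1/2) * ((G x)⁻¹ i e * dG i c e)
            + (1/2) * ((G x)⁻¹ i e * dG c i e) - (1/2) * ((G x)⁻¹ i e * dG e i c)) := by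
          refine Finset.sum_congr rfl fun i _ => ?_
          rw [hΓ, Finset.mul_sum]
          exact Finset.sum_congr rfl fun e _ => by ring
      _ = (1/2) * (∑ i, ∑ e, (G x)⁻¹ i e * dG i c e)
            + (1/2) * (∑ i, ∑ e, (G x)⁻¹ i e * dG c i e)
            - (1/2) * ∑ i, ∑ e, (G x)⁻¹ i e * dG e i c := by
          simp only [Finset.sum_add_distrib, Finset.sum_sub_distrib, ← Finset.mul_sum]
      _ = (1/2) * ∑ i, ∑ j, (G x)⁻¹ i j * dG c i j := by
          rw [hswap]; ring
  -- Claim A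
  have claimA : ∑ i, ((∑ c, Γ i i c * v c) + (∑ b, Γ i b i * v b))
      = ∑ k, (∑ i, ∑ j, (G x)⁻¹ i j * dG k i j) * v k := by
    calc ∑ i, ((∑ c, Γ i i c * v c) + (∑ b, Γ i b i * v b))
        = ∑ i, (2 * ∑ c, Γ i i c * v c) := by
          refine Finset.sum_congr rfl fun i _ => ?_
          have : ∑ b, Γ i b i * v b = ∑ c, Γ i i c * v c :=
            Finset.sum_congr rfl fun b _ => by rw [hΓsym i b i]
          rw [this]; ring
      _ = 2 * ∑ c, (∑ i, Γ i i c) * v c := by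
          rw [← Finset.mul_sum, Finset.sum_comm]
          congr 1
          exact Finset.sum_congr rfl fun c _ => (Finset.sum_mul _ _ _).symm
      _ = ∑ k, (∑ i, ∑ j, (G x)⁻¹ i j * dG k i j) * v k := by
          simp only [htr]
          rw [Finset.mul_sum]
          exact Finset.sum_congr rfl fun k _ => by ring
  -- K in terms of log π and log det derivatives
  have hKv : ∑ b, K b * v b
      = -(∑ j, fderiv ℝ (fun y => Real.log (π y)) x (Pi.single j 1) * v j)
        + (1/2) * ∑ b, (∑ i, ∑ j, (G x)⁻¹ i j * dG b i j) * v b := by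
    calc ∑ b, K b * v b
        = ∑ b, (-(fderiv ℝ (fun y => Real.log (π y)) x (Pi.single b 1) * v b)
            + (1/2) * ((∑ i, ∑ j, (G x)⁻¹ i j * dG b i j) * v b)) := by
          refine Finset.sum_congr rfl fun b _ => ?_
          rw [hKval b]; ring
      _ = _ := by
          rw [Finset.sum_add_distrib, Finset.sum_neg_distrib, ← Finset.mul_sum]
  -- final rearrangement of the target
  have hfinal : ∑ i, ∑ j, ∑ k, ((G x)⁻¹ i j - v i * v j) * dG k i j * v k
      = ∑ k, (∑ i, ∑ j, (G x)⁻¹ i j * dG k i j) * v k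
        - ∑ i, ∑ j, ∑ k, (v i * v j) * dG k i j * v k := by
    have e : ∀ i j k : Fin d, ((G x)⁻¹ i j - v i * v j) * dG k i j * v k
        = (G x)⁻¹ i j * dG k i j * v k - (v i * v j) * dG k i j * v k := fun i j k => by ring
    simp only [e, Finset.sum_sub_distrib]
    congr 1
    calc ∑ i, ∑ j, ∑ k, (G x)⁻¹ i j * dG k i j * v k
        = ∑ j, ∑ k, ∑ i, (G x)⁻¹ i j * dG k i j * v k := scyc _
      _ = ∑ k, ∑ i, ∑ j, (G x)⁻¹ i j * dG k i j * v k := scyc _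
      _ = ∑ k, (∑ i, ∑ j, (G x)⁻¹ i j * dG k i j) * v k := by
          refine Finset.sum_congr rfl fun k _ => ?_
          rw [Finset.sum_mul]
          exact Finset.sum_congr rfl fun i _ => (Finset.sum_mul _ _ _).symm
  rw [hsum, hsplit, claimA, claimB, claimC, hKv, hfinal]
  ring
end

section
/- In the Covariance-Adaptive BPS, where φ = (1/2) log det G, the rate function ρ_L = -μ⁻¹ div_v(Φ_v μ) simplifies to ρ_L = (1/2)(Gⁱʲ - vⁱvʲ)∂_k G_{ij} v^k = (1/2)tr(G⁻¹ ∂G/∂v) - (1/2)vᵀ(∂G/∂v)v. -/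
open Matrix

lemma hasFDerivAt_quadForm (T : Fin d → Fin d → ℝ) (v : Fin d → ℝ) :
    HasFDerivAt (fun w : Fin d → ℝ => ∑ b, ∑ c, T b c * w b * w c)
      (∑ b, ∑ c, ((T b c * v b) • ContinuousLinearMap.proj c
        + v c • (T b c • ContinuousLinearMap.proj b)) : (Fin d → ℝ) →L[ℝ] ℝ) v := by
  apply HasFDerivAt.fun_sum
  intro b _
  apply HasFDerivAt.fun_sum
  intro c _
  exact ((hasFDerivAt_apply b v).const_mul (T b c)).mul (hasFDerivAt_apply c v)

lemma quadForm_deriv_apply (T : Fin d → Fin d → ℝ) (v : Fin d → ℝ) (i : Fin d) :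
    (∑ b, ∑ c, ((T b c * v b) • ContinuousLinearMap.proj c
        + v c • (T b c • ContinuousLinearMap.proj b)) : (Fin d → ℝ) →L[ℝ] ℝ) (Pi.single i 1)
    = ∑ b, T b i * v b + ∑ c, v c * T i c := by
  simp [ContinuousLinearMap.sum_apply, ContinuousLinearMap.proj_apply,
    Pi.single_apply, mul_ite, ite_mul, Finset.sum_add_distrib, Finset.sum_ite_eq',
    smul_eq_mul]

lemma prod_deriv_single (T S : Fin d → Fin d → ℝ) (K C : ℝ) (v : Fin d → ℝ) (i : Fin d) :
    fderiv ℝ (fun w => (-(∑ b, ∑ c, T b c * w b * w c) - K)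
        * (C * Real.exp (-(∑ b, ∑ c, S b c * w b * w c) / 2))) v (Pi.single i 1)
      = (-(∑ b, ∑ c, T b c * v b * v c) - K)
          * (C * Real.exp (-(∑ b, ∑ c, S b c * v b * v c) / 2))
          * (-(∑ b, S b i * v b + ∑ c, v c * S i c) / 2)
        + (C * Real.exp (-(∑ b, ∑ c, S b c * v b * v c) / 2))
          * (-(∑ b, T b i * v b + ∑ c, v c * T i c)) := by
  simp only [div_eq_inv_mul]
  have hP := ((hasFDerivAt_quadForm T v).fun_neg).sub_const K
  have hg := (((hasFDerivAt_quadForm S v).fun_neg.const_mul ((2:ℝ)⁻¹)).exp).const_mul C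
  rw [(hP.fun_mul hg).fderiv]
  simp only [ContinuousLinearMap.add_apply, ContinuousLinearMap.smul_apply,
    ContinuousLinearMap.neg_apply, ContinuousLinearMap.coe_smul', Pi.smul_apply,
    smul_eq_mul, quadForm_deriv_apply]
  ring

lemma hasFDerivAt_detG (G : (Fin d → ℝ) → Matrix (Fin d) (Fin d) ℝ) (x : Fin d → ℝ)
    (hG : ∀ i k, DifferentiableAt ℝ (fun y => G y i k) x) :
    HasFDerivAt (fun y => (G y).det)
      ((∑ σ : Equiv.Perm (Fin d), ((Equiv.Perm.sign σ : ℤ) : ℝ) •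
        (∑ i, (∏ j ∈ Finset.univ.erase i, G x (σ j) j) •
          fderiv ℝ (fun y => G y (σ i) i) x) : (Fin d → ℝ) →L[ℝ] ℝ)) x := by
  have h1 : (fun y => (G y).det)
      = fun y => ∑ σ : Equiv.Perm (Fin d), ((Equiv.Perm.sign σ : ℤ) : ℝ) * ∏ i, G y (σ i) i := by
    funext y
    rw [Matrix.det_apply]
    refine Finset.sum_congr rfl fun σ _ => ?_
    rw [Units.smul_def, zsmul_eq_mul]
  rw [h1]
  apply HasFDerivAt.fun_sum
  intro σ _
  exact (HasFDerivAt.finset_prod (fun i _ => (hG (σ i) i).hasFDerivAt)).const_mul _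

lemma jacobi_sum (A H : Matrix (Fin d) (Fin d) ℝ) :
    ∑ σ : Equiv.Perm (Fin d), ((Equiv.Perm.sign σ : ℤ) : ℝ)
        * ∑ i, (∏ j ∈ Finset.univ.erase i, A (σ j) j) * H (σ i) i
      = ∑ i, ∑ r, adjugate A i r * H r i := by
  have h1 : ∀ i : Fin d, (A.updateCol i fun r => H r i).det
      = ∑ σ : Equiv.Perm (Fin d), ((Equiv.Perm.sign σ : ℤ) : ℝ)
          * ((∏ j ∈ Finset.univ.erase i, A (σ j) j) * H (σ i) i) := by
    intro i
    rw [Matrix.det_apply]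
    refine Finset.sum_congr rfl fun σ _ => ?_
    rw [Units.smul_def, zsmul_eq_mul]
    congr 1
    rw [← Finset.mul_prod_erase _ _ (Finset.mem_univ i)]
    rw [Matrix.updateCol_self]
    rw [Finset.prod_congr rfl fun j hj => ?_]
    · ring
    · rw [Matrix.updateCol_apply, if_neg (Finset.mem_erase.mp hj).1]
  calc ∑ σ : Equiv.Perm (Fin d), ((Equiv.Perm.sign σ : ℤ) : ℝ)
        * ∑ i, (∏ j ∈ Finset.univ.erase i, A (σ j) j) * H (σ i) i
      = ∑ i, ∑ σ : Equiv.Perm (Fin d), ((Equiv.Perm.sign σ : ℤ) : ℝ)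
          * ((∏ j ∈ Finset.univ.erase i, A (σ j) j) * H (σ i) i) := by
        simp only [Finset.mul_sum]; rw [Finset.sum_comm]
    _ = ∑ i, (A.updateCol i fun r => H r i).det := by
        exact Finset.sum_congr rfl fun i _ => (h1 i).symm
    _ = ∑ i, cramer A (fun r => H r i) i := by
        simp [Matrix.cramer_apply]
    _ = ∑ i, ∑ r, adjugate A i r * H r i := by
        simp [Matrix.cramer_eq_adjugate_mulVec, Matrix.mulVec, dotProduct]

lemma fderiv_phi (G : (Fin d → ℝ) → Matrix (Fin d) (Fin d) ℝ) (x : Fin d → ℝ)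
    (hG : ∀ i k, DifferentiableAt ℝ (fun y => G y i k) x)
    (hdet0 : (G x).det ≠ 0)
    (φ : (Fin d → ℝ) → ℝ) (hφdef : ∀ y, φ y = (1 / 2) * Real.log (G y).det)
    (u : Fin d → ℝ) :
    fderiv ℝ φ x u
      = 1 / 2 * ∑ i, ∑ r, (G x)⁻¹ i r * fderiv ℝ (fun y => G y r i) x u := by
  have hdet := hasFDerivAt_detG G x hG
  have hφfun : φ = fun y => (1 / 2 : ℝ) * Real.log ((G y).det) := funext hφdef
  have hφhas : HasFDerivAt φ ((1 / 2 : ℝ) • (((G x).det)⁻¹ •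
      ((∑ σ : Equiv.Perm (Fin d), ((Equiv.Perm.sign σ : ℤ) : ℝ) •
        (∑ i, (∏ j ∈ Finset.univ.erase i, G x (σ j) j) •
          fderiv ℝ (fun y => G y (σ i) i) x) : (Fin d → ℝ) →L[ℝ] ℝ)))) x := by
    rw [hφfun]
    exact (hdet.log hdet0).const_mul _
  rw [hφhas.fderiv]
  have hj := jacobi_sum (G x) (Matrix.of fun r i => fderiv ℝ (fun y => G y r i) x u)
  simp only [Matrix.of_apply] at hj
  simp only [ContinuousLinearMap.smul_apply, ContinuousLinearMap.sum_apply,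
    smul_eq_mul]
  rw [hj]
  rw [Finset.mul_sum]
  congr 1
  refine Finset.sum_congr rfl fun i _ => ?_
  rw [Finset.mul_sum]
  refine Finset.sum_congr rfl fun r _ => ?_
  rw [Matrix.inv_def, Ring.inverse_eq_inv, Matrix.smul_apply, smul_eq_mul]
  ring

lemma key_algebra (B : Matrix (Fin d) (Fin d) ℝ) (D : Fin d → Fin d → Fin d → ℝ)
    (v w : Fin d → ℝ)
    (hB : ∀ i j, B i j = B j i)
    (hD : ∀ k i j, D k i j = D k j i)
    (hvB : ∀ e, ∑ i, w i * B i e = v e) :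
    ∑ i, ((-(∑ b, ∑ c, ((1 / 2 : ℝ) * ∑ e, B i e * (D b c e + D c b e - D e b c)) * v b * v c)
          - ∑ b, B i b * ((1 / 2 : ℝ) * ∑ p, ∑ r, B p r * D b r p)) * w i
        + (∑ b, ((1 / 2 : ℝ) * ∑ e, B i e * (D b i e + D i b e - D e b i)) * v b
          + ∑ c, v c * ((1 / 2 : ℝ) * ∑ e, B i e * (D i c e + D c i e - D e i c))))
      = (1 / 2 : ℝ) * ∑ i, ∑ j, ∑ k, (B i j - v i * v j) * D k i j * v k := by
  classical
  -- shorthand triple sums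
  set X : ℝ := ∑ i, ∑ j, ∑ k, B i j * D k i j * v k with hX
  set Y : ℝ := ∑ i, ∑ j, ∑ k, v i * v j * D k i j * v k with hY
  -- S1 : the Γ-trace part
  have hS1 : (∑ i, (∑ b, ((1 / 2 : ℝ) * ∑ e, B i e * (D b i e + D i b e - D e b i)) * v b
          + ∑ c, v c * ((1 / 2 : ℝ) * ∑ e, B i e * (D i c e + D c i e - D e i c)))) = X := by
    have key : ∀ i : Fin d, (∑ b, ((1 / 2 : ℝ) * ∑ e, B i e * (D b i e + D i b e - D e b i)) * v b
          + ∑ c, v c * ((1 / 2 : ℝ) * ∑ e, B i e * (D i c e + D c i e - D e i c)))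
        = ∑ b, ∑ e, (v b * (B i e * D b i e) + v b * (B i e * D i b e)
            - v b * (B i e * D e b i)) := by
      intro i
      rw [← Finset.sum_add_distrib]
      refine Finset.sum_congr rfl fun b _ => ?_
      rw [Finset.mul_sum, Finset.sum_mul, Finset.mul_sum, Finset.mul_sum,
        ← Finset.sum_add_distrib]
      refine Finset.sum_congr rfl fun e _ => ?_
      rw [hD e i b]
      ring
    rw [Finset.sum_congr rfl fun i _ => key i]
    simp only [Finset.sum_add_distrib, Finset.sum_sub_distrib]
    -- now : N1 + N2 - N3 = X
    have hN2 : (∑ i, ∑ b, ∑ e, v b * (B i e * D i b e))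
        = ∑ i, ∑ b, ∑ e, v b * (B i e * D e b i) := by
      calc ∑ i, ∑ b, ∑ e, v b * (B i e * D i b e)
          = ∑ b, ∑ i, ∑ e, v b * (B i e * D i b e) := Finset.sum_comm
        _ = ∑ b, ∑ e, ∑ i, v b * (B i e * D i b e) :=
            Finset.sum_congr rfl fun b _ => Finset.sum_comm
        _ = ∑ b, ∑ i, ∑ e, v b * (B e i * D e b i) := rfl
        _ = ∑ b, ∑ i, ∑ e, v b * (B i e * D e b i) := by
            refine Finset.sum_congr rfl fun b _ => Finset.sum_congr rfl fun i _ =>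
              Finset.sum_congr rfl fun e _ => ?_
            rw [hB e i]
        _ = ∑ i, ∑ b, ∑ e, v b * (B i e * D e b i) := Finset.sum_comm
    have hN1 : (∑ i, ∑ b, ∑ e, v b * (B i e * D b i e)) = X := by
      calc ∑ i, ∑ b, ∑ e, v b * (B i e * D b i e)
          = ∑ i, ∑ e, ∑ b, v b * (B i e * D b i e) :=
            Finset.sum_congr rfl fun i _ => Finset.sum_comm
        _ = ∑ i, ∑ j, ∑ k, v k * (B i j * D k i j) := rfl
        _ = X := by
            rw [hX]
            exact Finset.sum_congr rfl fun i _ => Finset.sum_congr rfl fun j _ =>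
              Finset.sum_congr rfl fun k _ => by ring
    rw [hN2, hN1]
    ring
  -- S2 : the φ-gradient part
  have hS2 : (∑ i, w i * ∑ b, B i b * ((1 / 2 : ℝ) * ∑ p, ∑ r, B p r * D b r p))
      = (1 / 2 : ℝ) * X := by
    have step1 : (∑ i, w i * ∑ b, B i b * ((1 / 2 : ℝ) * ∑ p, ∑ r, B p r * D b r p))
        = ∑ b, v b * ((1 / 2 : ℝ) * ∑ p, ∑ r, B p r * D b r p) := by
      calc ∑ i, w i * ∑ b, B i b * ((1 / 2 : ℝ) * ∑ p, ∑ r, B p r * D b r p)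
          = ∑ i, ∑ b, w i * (B i b * ((1 / 2 : ℝ) * ∑ p, ∑ r, B p r * D b r p)) := by
            exact Finset.sum_congr rfl fun i _ => Finset.mul_sum _ _ _
        _ = ∑ b, ∑ i, w i * (B i b * ((1 / 2 : ℝ) * ∑ p, ∑ r, B p r * D b r p)) :=
            Finset.sum_comm
        _ = ∑ b, (∑ i, w i * B i b) * ((1 / 2 : ℝ) * ∑ p, ∑ r, B p r * D b r p) := by
            refine Finset.sum_congr rfl fun b _ => ?_
            rw [Finset.sum_mul]
            exact Finset.sum_congr rfl fun i _ => by ring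
        _ = ∑ b, v b * ((1 / 2 : ℝ) * ∑ p, ∑ r, B p r * D b r p) := by
            exact Finset.sum_congr rfl fun b _ => by rw [hvB b]
    rw [step1]
    have step2 : (∑ b, v b * ((1 / 2 : ℝ) * ∑ p, ∑ r, B p r * D b r p))
        = (1 / 2 : ℝ) * ∑ b, ∑ p, ∑ r, v b * (B p r * D b p r) := by
      rw [Finset.mul_sum]
      refine Finset.sum_congr rfl fun b _ => ?_
      rw [Finset.mul_sum, Finset.mul_sum, Finset.mul_sum]
      refine Finset.sum_congr rfl fun p _ => ?_
      rw [Finset.mul_sum, Finset.mul_sum, Finset.mul_sum]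
      refine Finset.sum_congr rfl fun r _ => ?_
      rw [hD b r p]
      ring
    rw [step2]
    congr 1
    calc ∑ b, ∑ p, ∑ r, v b * (B p r * D b p r)
        = ∑ p, ∑ b, ∑ r, v b * (B p r * D b p r) := Finset.sum_comm
      _ = ∑ p, ∑ r, ∑ b, v b * (B p r * D b p r) :=
          Finset.sum_congr rfl fun p _ => Finset.sum_comm
      _ = ∑ i, ∑ j, ∑ k, v k * (B i j * D k i j) := rfl
      _ = X := by
          rw [hX]
          exact Finset.sum_congr rfl fun i _ => Finset.sum_congr rfl fun j _ =>
            Finset.sum_congr rfl fun k _ => by ring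
  -- S3 : the quadratic-in-v part
  have hS3 : (∑ i, w i * ∑ b, ∑ c,
        ((1 / 2 : ℝ) * ∑ e, B i e * (D b c e + D c b e - D e b c)) * v b * v c)
      = (1 / 2 : ℝ) * Y := by
    have step1 : (∑ i, w i * ∑ b, ∑ c,
          ((1 / 2 : ℝ) * ∑ e, B i e * (D b c e + D c b e - D e b c)) * v b * v c)
        = ∑ b, ∑ c, ∑ e, ((1 / 2 : ℝ) * (v b * v c * v e * D b c e)
            + (1 / 2 : ℝ) * (v b * v c * v e * D c b e)
            - (1 / 2 : ℝ) * (v b * v c * v e * D e b c)) := by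
      calc ∑ i, w i * ∑ b, ∑ c,
            ((1 / 2 : ℝ) * ∑ e, B i e * (D b c e + D c b e - D e b c)) * v b * v c
          = ∑ i, ∑ b, ∑ c, w i * (((1 / 2 : ℝ) * ∑ e, B i e * (D b c e + D c b e - D e b c)) * v b * v c) := by
            refine Finset.sum_congr rfl fun i _ => ?_
            rw [Finset.mul_sum]
            exact Finset.sum_congr rfl fun b _ => Finset.mul_sum _ _ _
        _ = ∑ b, ∑ i, ∑ c, w i * (((1 / 2 : ℝ) * ∑ e, B i e * (D b c e + D c b e - D e b c)) * v b * v c) :=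
            Finset.sum_comm
        _ = ∑ b, ∑ c, ∑ i, w i * (((1 / 2 : ℝ) * ∑ e, B i e * (D b c e + D c b e - D e b c)) * v b * v c) :=
            Finset.sum_congr rfl fun b _ => Finset.sum_comm
        _ = ∑ b, ∑ c, ∑ e, (∑ i, w i * B i e) *
              ((1 / 2 : ℝ) * ((D b c e + D c b e - D e b c) * v b * v c)) := by
            refine Finset.sum_congr rfl fun b _ => Finset.sum_congr rfl fun c _ => ?_
            calc ∑ i, w i * (((1 / 2 : ℝ) * ∑ e, B i e * (D b c e + D c b e - D e b c)) * v b * v c)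
                = ∑ i, ∑ e, w i * B i e *
                    ((1 / 2 : ℝ) * ((D b c e + D c b e - D e b c) * v b * v c)) := by
                  refine Finset.sum_congr rfl fun i _ => ?_
                  rw [Finset.mul_sum, Finset.sum_mul, Finset.sum_mul, Finset.mul_sum]
                  exact Finset.sum_congr rfl fun e _ => by ring
              _ = ∑ e, ∑ i, w i * B i e *
                    ((1 / 2 : ℝ) * ((D b c e + D c b e - D e b c) * v b * v c)) :=
                  Finset.sum_comm
              _ = ∑ e, (∑ i, w i * B i e) *
                    ((1 / 2 : ℝ) * ((D b c e + D c b e - D e b c) * v b * v c)) := by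
                  refine Finset.sum_congr rfl fun e _ => ?_
                  rw [← Finset.sum_mul]
        _ = ∑ b, ∑ c, ∑ e, ((1 / 2 : ℝ) * (v b * v c * v e * D b c e)
              + (1 / 2 : ℝ) * (v b * v c * v e * D c b e)
              - (1 / 2 : ℝ) * (v b * v c * v e * D e b c)) := by
            refine Finset.sum_congr rfl fun b _ => Finset.sum_congr rfl fun c _ =>
              Finset.sum_congr rfl fun e _ => ?_
            rw [hvB e]
            ring
    rw [step1]
    simp only [Finset.sum_add_distrib, Finset.sum_sub_distrib]
    have hU2 : (∑ b, ∑ c, ∑ e, (1 / 2 : ℝ) * (v b * v c * v e * D c b e))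
        = ∑ b, ∑ c, ∑ e, (1 / 2 : ℝ) * (v b * v c * v e * D b c e) := by
      calc ∑ b, ∑ c, ∑ e, (1 / 2 : ℝ) * (v b * v c * v e * D c b e)
          = ∑ c, ∑ b, ∑ e, (1 / 2 : ℝ) * (v b * v c * v e * D c b e) := Finset.sum_comm
        _ = ∑ b, ∑ c, ∑ e, (1 / 2 : ℝ) * (v b * v c * v e * D b c e) := by
            refine Finset.sum_congr rfl fun b _ => Finset.sum_congr rfl fun c _ =>
              Finset.sum_congr rfl fun e _ => by ring
    have hU3 : (∑ b, ∑ c, ∑ e, (1 / 2 : ℝ) * (v b * v c * v e * D e b c))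
        = ∑ b, ∑ c, ∑ e, (1 / 2 : ℝ) * (v b * v c * v e * D b c e) := by
      calc ∑ b, ∑ c, ∑ e, (1 / 2 : ℝ) * (v b * v c * v e * D e b c)
          = ∑ b, ∑ e, ∑ c, (1 / 2 : ℝ) * (v b * v c * v e * D e b c) :=
            Finset.sum_congr rfl fun b _ => Finset.sum_comm
        _ = ∑ e, ∑ b, ∑ c, (1 / 2 : ℝ) * (v b * v c * v e * D e b c) := Finset.sum_comm
        _ = ∑ b, ∑ c, ∑ e, (1 / 2 : ℝ) * (v b * v c * v e * D b c e) := by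
            refine Finset.sum_congr rfl fun b _ => Finset.sum_congr rfl fun c _ =>
              Finset.sum_congr rfl fun e _ => by ring
    rw [hU2, hU3]
    have hU1Y : (∑ b, ∑ c, ∑ e, (1 / 2 : ℝ) * (v b * v c * v e * D b c e))
        = (1 / 2 : ℝ) * Y := by
      calc ∑ b, ∑ c, ∑ e, (1 / 2 : ℝ) * (v b * v c * v e * D b c e)
          = ∑ c, ∑ b, ∑ e, (1 / 2 : ℝ) * (v b * v c * v e * D b c e) := Finset.sum_comm
        _ = ∑ c, ∑ e, ∑ b, (1 / 2 : ℝ) * (v b * v c * v e * D b c e) :=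
            Finset.sum_congr rfl fun c _ => Finset.sum_comm
        _ = ∑ i, ∑ j, ∑ k, (1 / 2 : ℝ) * (v i * v j * D k i j * v k) := by
            refine Finset.sum_congr rfl fun i _ => Finset.sum_congr rfl fun j _ =>
              Finset.sum_congr rfl fun k _ => by ring
        _ = (1 / 2 : ℝ) * Y := by
            rw [hY, Finset.mul_sum]
            refine Finset.sum_congr rfl fun i _ => ?_
            rw [Finset.mul_sum]
            refine Finset.sum_congr rfl fun j _ => ?_
            rw [Finset.mul_sum]
    rw [hU1Y]
    ring
  -- assemble
  have split : ∀ i : Fin d,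
      ((-(∑ b, ∑ c, ((1 / 2 : ℝ) * ∑ e, B i e * (D b c e + D c b e - D e b c)) * v b * v c)
          - ∑ b, B i b * ((1 / 2 : ℝ) * ∑ p, ∑ r, B p r * D b r p)) * w i
        + (∑ b, ((1 / 2 : ℝ) * ∑ e, B i e * (D b i e + D i b e - D e b i)) * v b
          + ∑ c, v c * ((1 / 2 : ℝ) * ∑ e, B i e * (D i c e + D c i e - D e i c))))
      = (∑ b, ((1 / 2 : ℝ) * ∑ e, B i e * (D b i e + D i b e - D e b i)) * v b
          + ∑ c, v c * ((1 / 2 : ℝ) * ∑ e, B i e * (D i c e + D c i e - D e i c)))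
        - w i * (∑ b, ∑ c, ((1 / 2 : ℝ) * ∑ e, B i e * (D b c e + D c b e - D e b c)) * v b * v c)
        - w i * (∑ b, B i b * ((1 / 2 : ℝ) * ∑ p, ∑ r, B p r * D b r p)) := fun i => by ring
  rw [Finset.sum_congr rfl fun i _ => split i]
  simp only [Finset.sum_sub_distrib]
  rw [hS1, hS2, hS3]
  have hRHS : (∑ i, ∑ j, ∑ k, (B i j - v i * v j) * D k i j * v k) = X - Y := by
    rw [hX, hY, ← Finset.sum_sub_distrib]
    refine Finset.sum_congr rfl fun i _ => ?_
    rw [← Finset.sum_sub_distrib]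
    refine Finset.sum_congr rfl fun j _ => ?_
    rw [← Finset.sum_sub_distrib]
    refine Finset.sum_congr rfl fun k _ => by ring
  rw [hRHS]
  ring

/-- Covariance-Adaptive BPS rate: with `φ = ½ log det G`, the rate
`ρ_L = -μ⁻¹ div_v(Φ_v μ)` simplifies to
`ρ_L = ½ (Gⁱʲ - vⁱvʲ) ∂_k G_{ij} v^k`. -/
theorem stmt11 (d : ℕ) (G : (Fin d → ℝ) → Matrix (Fin d) (Fin d) ℝ)
    (hGsmooth : ∀ i k, ContDiff ℝ (⊤ : ℕ∞) (fun x => G x i k))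
    (hGsymm : ∀ x, (G x).IsSymm) (hGpd : ∀ x, (G x).PosDef)
    (π : (Fin d → ℝ) → ℝ) (hπ : ContDiff ℝ (⊤ : ℕ∞) π) (hπpos : ∀ x, 0 < π x)
    (φ : (Fin d → ℝ) → ℝ)
    (hφdef : ∀ y, φ y = (1 / 2) * Real.log (G y).det)
    (μ : (Fin d → ℝ) → (Fin d → ℝ) → ℝ)
    (hμ : ∀ x v, μ x v = π x * (2 * Real.pi) ^ (-(d : ℝ) / 2)
        * Real.sqrt (G x).det * Real.exp (-(v ⬝ᵥ G x *ᵥ v) / 2))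
    (x v : Fin d → ℝ)
    (dG : Fin d → Fin d → Fin d → ℝ)
    (hdG : ∀ j i k, dG j i k = fderiv ℝ (fun y => G y i k) x (Pi.single j 1))
    (Γ : Fin d → Fin d → Fin d → ℝ)
    (hΓ : ∀ a b c, Γ a b c
      = (1 / 2) * ∑ e, (G x)⁻¹ a e * (dG b c e + dG c b e - dG e b c))
    (Φ : (Fin d → ℝ) → (Fin d → ℝ))
    (hΦ : ∀ w a, Φ w a = -(∑ b, ∑ c, Γ a b c * w b * w c)
        - ∑ b, (G x)⁻¹ a b * fderiv ℝ φ x (Pi.single b 1))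
    (ρ : ℝ)
    (hρ : ρ = -(μ x v)⁻¹
        * (∑ i, fderiv ℝ (fun w => Φ w i * μ x w) v (Pi.single i 1))) :
    ρ = (1 / 2) * ∑ i, ∑ j, ∑ k, ((G x)⁻¹ i j - v i * v j) * dG k i j * v k := by
  classical
  have hdet0 : (G x).det ≠ 0 := (hGpd x).det_pos.ne'
  -- quadratic form rewriting
  have hq : ∀ w : Fin d → ℝ, w ⬝ᵥ G x *ᵥ w = ∑ b, ∑ c, G x b c * w b * w c := by
    intro w
    simp only [dotProduct, Matrix.mulVec, Finset.mul_sum]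
    exact Finset.sum_congr rfl fun b _ => Finset.sum_congr rfl fun c _ => by ring
  have hμv : ∀ w, μ x w = π x * (2 * Real.pi) ^ (-(d : ℝ) / 2) * Real.sqrt (G x).det
      * Real.exp (-(∑ b, ∑ c, G x b c * w b * w c) / 2) := by
    intro w; rw [hμ, hq]
  have hμne : μ x v ≠ 0 := by
    rw [hμv]
    have h1 : 0 < π x := hπpos x
    have h2 : (0 : ℝ) < (2 * Real.pi) ^ (-(d : ℝ) / 2) :=
      Real.rpow_pos_of_pos (by positivity) _
    have h3 : 0 < Real.sqrt (G x).det := Real.sqrt_pos.mpr (hGpd x).det_pos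
    positivity
  -- symmetry facts
  have hGy : ∀ (y : Fin d → ℝ) i j, G y i j = G y j i :=
    fun y i j => (hGsymm y).apply j i
  have hBsym : ∀ i j, (G x)⁻¹ i j = (G x)⁻¹ j i := by
    intro i j
    have h : ((G x)⁻¹)ᵀ = (G x)⁻¹ := by
      rw [Matrix.transpose_nonsing_inv, (hGsymm x).eq]
    exact (congrFun (congrFun h i) j).symm
  have hDsym : ∀ k i j, dG k i j = dG k j i := by
    intro k i j
    rw [hdG, hdG]
    congr 2
    funext y
    exact hGy y i j
  have hBA : ∀ e c, (∑ i, (G x)⁻¹ e i * G x i c) = if e = c then 1 else 0 := by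
    intro e c
    have h := Matrix.nonsing_inv_mul (G x) (isUnit_iff_ne_zero.mpr hdet0)
    calc (∑ i, (G x)⁻¹ e i * G x i c) = ((G x)⁻¹ * G x) e c := (Matrix.mul_apply).symm
      _ = (1 : Matrix (Fin d) (Fin d) ℝ) e c := by rw [h]
      _ = if e = c then 1 else 0 := Matrix.one_apply
  have hvB : ∀ e, (∑ i, (∑ c, G x i c * v c) * (G x)⁻¹ i e) = v e := by
    intro e
    calc (∑ i, (∑ c, G x i c * v c) * (G x)⁻¹ i e)
        = ∑ i, ∑ c, (G x)⁻¹ e i * G x i c * v c := by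
          refine Finset.sum_congr rfl fun i _ => ?_
          rw [Finset.sum_mul]
          refine Finset.sum_congr rfl fun c _ => ?_
          rw [hBsym i e]
          ring
      _ = ∑ c, ∑ i, (G x)⁻¹ e i * G x i c * v c := Finset.sum_comm
      _ = ∑ c, (if e = c then 1 else 0) * v c := by
          refine Finset.sum_congr rfl fun c _ => ?_
          rw [← Finset.sum_mul, hBA e c]
      _ = v e := by simp
  -- φ-gradient
  have hpφ : ∀ b, fderiv ℝ φ x (Pi.single b 1)
      = 1 / 2 * ∑ p, ∑ r, (G x)⁻¹ p r * dG b r p := by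
    intro b
    rw [fderiv_phi G x
      (fun i k => ((hGsmooth i k).differentiable (by simp)).differentiableAt) hdet0 φ hφdef]
    congr 1
    refine Finset.sum_congr rfl fun p _ => Finset.sum_congr rfl fun r _ => ?_
    rw [← hdG b r p]
  -- per-direction derivative of the flux
  have hval : ∀ i, fderiv ℝ (fun w => Φ w i * μ x w) v (Pi.single i 1)
      = Φ v i * μ x v * (-(∑ b, G x b i * v b + ∑ c, v c * G x i c) / 2)
        + μ x v * (-(∑ b, Γ i b i * v b + ∑ c, v c * Γ i i c)) := by
    intro i
    have hfun : (fun w => Φ w i * μ x w) = fun w =>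
        (-(∑ b, ∑ c, Γ i b c * w b * w c)
          - ∑ b, (G x)⁻¹ i b * fderiv ℝ φ x (Pi.single b 1))
        * (π x * (2 * Real.pi) ^ (-(d : ℝ) / 2) * Real.sqrt (G x).det
            * Real.exp (-(∑ b, ∑ c, G x b c * w b * w c) / 2)) := by
      funext w; rw [hΦ, hμv]
    rw [hfun, prod_deriv_single (Γ i) (G x) (∑ b, (G x)⁻¹ i b * fderiv ℝ φ x (Pi.single b 1))
      (π x * (2 * Real.pi) ^ (-(d : ℝ) / 2) * Real.sqrt (G x).det) v i]
    rw [← hμv v, ← hΦ v i]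
  -- eliminate μ
  have h7 : ∀ i : Fin d, Φ v i * μ x v * (-(∑ b, G x b i * v b + ∑ c, v c * G x i c) / 2)
        + μ x v * (-(∑ b, Γ i b i * v b + ∑ c, v c * Γ i i c))
      = μ x v * (-(Φ v i * ((∑ b, G x b i * v b + ∑ c, v c * G x i c) / 2)
          + (∑ b, Γ i b i * v b + ∑ c, v c * Γ i i c))) := fun i => by ring
  have hρ2 : ρ = ∑ i, (Φ v i * ((∑ b, G x b i * v b + ∑ c, v c * G x i c) / 2)
      + (∑ b, Γ i b i * v b + ∑ c, v c * Γ i i c)) := by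
    rw [hρ, Finset.sum_congr rfl fun i _ => hval i,
      Finset.sum_congr rfl fun i _ => h7 i, ← Finset.mul_sum, Finset.sum_neg_distrib]
    field_simp
  -- symmetrize the (Gv) factor
  have hs : ∀ i, ((∑ b, G x b i * v b + ∑ c, v c * G x i c) / 2) = ∑ c, G x i c * v c := by
    intro i
    have e1 : (∑ b, G x b i * v b) = ∑ b, G x i b * v b :=
      Finset.sum_congr rfl fun b _ => by rw [hGy x b i]
    have e2 : (∑ c, v c * G x i c) = ∑ c, G x i c * v c :=
      Finset.sum_congr rfl fun c _ => by ring
    rw [e1, e2]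
    ring
  rw [hρ2, Finset.sum_congr rfl fun i _ => by rw [hs i]]
  simp only [hΦ, hΓ, hpφ]
  exact key_algebra ((G x)⁻¹) dG v (fun i => ∑ c, G x i c * v c) hBsym hDsym hvB
end

section
/- With μ(x,v) = π(x)(2π)^{-d/2} det G(x)^{1/2} exp(-vᵀG(x)v/2), the directional derivative of log μ along (v, 0) satisfies -v·∇_x log μ = -⟨v, ∇log π⟩ - (1/2)(Gⁱʲ - vⁱvʲ)∂_kG_{ij}v^k. Consequently, the x-flow mass balance of the Covariance-Adaptive BPS vanishes: -μ⁻¹div_x(μ·v) + ⟨v,∇log π⟩ + ρ_L = 0, where ρ_L = (1/2)(Gⁱʲ - vⁱvʲ)∂_kG_{ij}v^k. -/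
open Matrix

lemma key_det_sum {d : ℕ} (A H : Matrix (Fin d) (Fin d) ℝ) :
    ∑ σ : Equiv.Perm (Fin d), ((Equiv.Perm.sign σ : ℤ) : ℝ) *
        ∑ i, (∏ j ∈ Finset.univ.erase i, A (σ j) j) * H (σ i) i
      = ∑ i, ∑ j, A.adjugate i j * H j i := by
  simp_rw [Finset.mul_sum]
  rw [Finset.sum_comm]
  refine Finset.sum_congr rfl fun i _ => ?_
  have h1 : ∑ σ : Equiv.Perm (Fin d), ((Equiv.Perm.sign σ : ℤ) : ℝ) *
      ((∏ j ∈ Finset.univ.erase i, A (σ j) j) * H (σ i) i)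
      = (A.updateCol i (fun r => H r i)).det := by
    rw [Matrix.det_apply']
    refine Finset.sum_congr rfl fun σ _ => ?_
    rw [← Finset.mul_prod_erase Finset.univ _ (Finset.mem_univ i),
      Matrix.updateCol_self,
      Finset.prod_congr rfl (fun j hj => Matrix.updateCol_ne (Finset.ne_of_mem_erase hj))]
    ring
  rw [h1, ← Matrix.cramer_apply, Matrix.cramer_eq_adjugate_mulVec]
  simp [Matrix.mulVec, dotProduct]

lemma hasFDerivAt_det {d : ℕ} (G : (Fin d → ℝ) → Matrix (Fin d) (Fin d) ℝ) (x : Fin d → ℝ)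
    (f' : Fin d → Fin d → ((Fin d → ℝ) →L[ℝ] ℝ))
    (hf' : ∀ i j, HasFDerivAt (fun y => G y i j) (f' i j) x) :
    HasFDerivAt (fun y => (G y).det)
      (∑ i, ∑ j, (G x).adjugate i j • f' j i) x := by
  have h1 : HasFDerivAt (fun y => (G y).det)
      (∑ σ : Equiv.Perm (Fin d), ((Equiv.Perm.sign σ : ℤ) : ℝ) •
        (∑ i, (∏ j ∈ Finset.univ.erase i, G x (σ j) j) • f' (σ i) i)) x := by
    have hfun : (fun y => (G y).det) = fun y =>
        ∑ σ : Equiv.Perm (Fin d), ((Equiv.Perm.sign σ : ℤ) : ℝ) * ∏ i, G y (σ i) i := by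
      funext y; exact Matrix.det_apply' _
    rw [hfun]
    exact HasFDerivAt.fun_sum fun σ _ =>
      (HasFDerivAt.finset_prod (fun i _ => hf' (σ i) i)).const_mul _
  refine h1.congr_fderiv ?_
  ext w
  simp only [ContinuousLinearMap.coe_sum', Finset.sum_apply, ContinuousLinearMap.coe_smul',
    Pi.smul_apply, smul_eq_mul]
  simpa using key_det_sum (G x) (Matrix.of fun i j => f' i j w)

lemma sum_comm3 {d : ℕ} (F : Fin d → Fin d → Fin d → ℝ) :
    ∑ i, ∑ j, ∑ k, F i j k = ∑ k, ∑ i, ∑ j, F i j k :=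
  (Finset.sum_congr rfl fun i _ => Finset.sum_comm).trans Finset.sum_comm


/-- With `μ(x,v) = π(x)(2π)^{-d/2} det G(x)^{1/2} exp(-vᵀG(x)v/2)`:
(a) `-v·∇_x log μ = -⟨v, ∇log π⟩ - ½ (Gⁱʲ - vⁱvʲ) ∂_k G_{ij} v^k`, and
(b) the x-flow mass balance of the Covariance-Adaptive BPS vanishes:
`-μ⁻¹ div_x(μ·v) + ⟨v, ∇log π⟩ + ρ_L = 0`, with
`ρ_L = ½ (Gⁱʲ - vⁱvʲ) ∂_k G_{ij} v^k`. -/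
theorem stmt12 (d : ℕ) (G : (Fin d → ℝ) → Matrix (Fin d) (Fin d) ℝ)
    (hGsmooth : ∀ i k, ContDiff ℝ (⊤ : ℕ∞) (fun x => G x i k))
    (hGsymm : ∀ x, (G x).IsSymm) (hGpd : ∀ x, (G x).PosDef)
    (π : (Fin d → ℝ) → ℝ) (hπ : ContDiff ℝ (⊤ : ℕ∞) π) (hπpos : ∀ x, 0 < π x)
    (μ : (Fin d → ℝ) → (Fin d → ℝ) → ℝ)
    (hμ : ∀ x v, μ x v = π x * (2 * Real.pi) ^ (-(d : ℝ) / 2)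
        * Real.sqrt (G x).det * Real.exp (-(v ⬝ᵥ G x *ᵥ v) / 2))
    (x v : Fin d → ℝ)
    (dG : Fin d → Fin d → Fin d → ℝ)
    (hdG : ∀ j i k, dG j i k = fderiv ℝ (fun y => G y i k) x (Pi.single j 1))
    (ρL : ℝ)
    (hρL : ρL = (1 / 2)
        * ∑ i, ∑ j, ∑ k, ((G x)⁻¹ i j - v i * v j) * dG k i j * v k) :
    (-(∑ k, v k * fderiv ℝ (fun y => Real.log (μ y v)) x (Pi.single k 1))
      = -(∑ k, v k * fderiv ℝ (fun y => Real.log (π y)) x (Pi.single k 1))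
        - (1 / 2)
          * ∑ i, ∑ j, ∑ k, ((G x)⁻¹ i j - v i * v j) * dG k i j * v k) ∧
    (-(μ x v)⁻¹ * (∑ k, fderiv ℝ (fun y => μ y v * v k) x (Pi.single k 1))
      + (∑ k, v k * fderiv ℝ (fun y => Real.log (π y)) x (Pi.single k 1))
      + ρL = 0) := by
  have hdet_pos : 0 < (G x).det := (hGpd x).det_pos
  -- entrywise derivatives
  set f' : Fin d → Fin d → ((Fin d → ℝ) →L[ℝ] ℝ) :=
    fun i j => fderiv ℝ (fun y => G y i j) x with hf'def
  have hf' : ∀ i j, HasFDerivAt (fun y => G y i j) (f' i j) x :=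
    fun i j => ((hGsmooth i j).differentiable (by simp) x).hasFDerivAt
  have hdGval : ∀ k i j, f' i j (Pi.single k 1) = dG k i j := fun k i j => (hdG k i j).symm
  have hGsym' : ∀ y i j, G y i j = G y j i := fun y i j =>
    ((congrFun (congrFun (hGsymm y) i) j).symm).trans (Matrix.transpose_apply _ _ _)
  have hdGsymm : ∀ k i j, dG k j i = dG k i j := by
    intro k i j
    rw [hdG, hdG]
    congr 2
    funext y
    exact (hGsym' y j i)
  -- determinant derivative (Jacobi)
  have hdet : HasFDerivAt (fun y => (G y).det)
      (∑ i, ∑ j, (G x).adjugate i j • f' j i) x := hasFDerivAt_det G x f' hf'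
  have hlogdet : HasFDerivAt (fun y => Real.log ((G y).det))
      (((G x).det)⁻¹ • ∑ i, ∑ j, (G x).adjugate i j • f' j i) x :=
    hdet.log hdet_pos.ne'
  -- quadratic form derivative
  have hq : HasFDerivAt (fun y => v ⬝ᵥ G y *ᵥ v)
      (∑ i, ∑ j, (v i * v j) • f' i j) x := by
    have hfun : (fun y => v ⬝ᵥ G y *ᵥ v) = fun y => ∑ i, ∑ j, v i * v j * G y i j := by
      funext y
      simp only [dotProduct, Matrix.mulVec, Finset.mul_sum]
      exact Finset.sum_congr rfl fun i _ => Finset.sum_congr rfl fun j _ => by ring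
    rw [hfun]
    exact HasFDerivAt.fun_sum fun i _ => HasFDerivAt.fun_sum fun j _ => (hf' i j).const_mul _
  -- log π derivative
  have hπdiff : DifferentiableAt ℝ (fun y => Real.log (π y)) x :=
    (hπ.differentiable (by simp) x).log (hπpos x).ne'
  set Lπ := fderiv ℝ (fun y => Real.log (π y)) x with hLπdef
  have hLπ : HasFDerivAt (fun y => Real.log (π y)) Lπ x := hπdiff.hasFDerivAt
  -- positivity of μ
  have hrpow_pos : 0 < (2 * Real.pi) ^ (-(d : ℝ) / 2) :=
    Real.rpow_pos_of_pos (by positivity) _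
  have hμpos : ∀ y, 0 < μ y v := by
    intro y
    rw [hμ]
    exact mul_pos (mul_pos (mul_pos (hπpos y) hrpow_pos)
      (Real.sqrt_pos.mpr (hGpd y).det_pos)) (Real.exp_pos _)
  -- log μ decomposition
  have hlogμ : ∀ y, Real.log (μ y v)
      = (Real.log (π y) + Real.log ((2 * Real.pi) ^ (-(d : ℝ) / 2))
        + (1 / 2) * Real.log ((G y).det)) + (-(1 / 2) * (v ⬝ᵥ G y *ᵥ v)) := by
    intro y
    have h0 : π y * (2 * Real.pi) ^ (-(d : ℝ) / 2) ≠ 0 :=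
      (mul_pos (hπpos y) hrpow_pos).ne'
    have h1 : π y * (2 * Real.pi) ^ (-(d : ℝ) / 2) * Real.sqrt ((G y).det) ≠ 0 :=
      (mul_pos (mul_pos (hπpos y) hrpow_pos) (Real.sqrt_pos.mpr (hGpd y).det_pos)).ne'
    rw [hμ, Real.log_mul h1 (Real.exp_ne_zero _),
      Real.log_mul h0 (Real.sqrt_pos.mpr (hGpd y).det_pos).ne',
      Real.log_mul (hπpos y).ne' hrpow_pos.ne', Real.log_exp,
      Real.log_sqrt (hGpd y).det_pos.le]
    ring
  -- total derivative of log μ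
  set Llog := Lπ + (1 / 2 : ℝ) • (((G x).det)⁻¹ • ∑ i, ∑ j, (G x).adjugate i j • f' j i)
      + (-(1 / 2) : ℝ) • ∑ i, ∑ j, (v i * v j) • f' i j with hLlogdef
  have hLlog : HasFDerivAt (fun y => Real.log (μ y v)) Llog x := by
    have hfun : (fun y => Real.log (μ y v))
        = fun y => (Real.log (π y) + Real.log ((2 * Real.pi) ^ (-(d : ℝ) / 2))
          + (1 / 2) * Real.log ((G y).det)) + (-(1 / 2) * (v ⬝ᵥ G y *ᵥ v)) :=
      funext hlogμ
    rw [hfun, hLlogdef]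
    exact ((hLπ.add_const _).add (hlogdet.const_mul _)).add (hq.const_mul _)
  have hfd : fderiv ℝ (fun y => Real.log (μ y v)) x = Llog := hLlog.fderiv
  -- evaluation of Llog at basis vectors
  have hinv : ∀ i j, (G x)⁻¹ i j = ((G x).det)⁻¹ * (G x).adjugate i j := by
    intro i j
    rw [Matrix.inv_def]
    simp [Ring.inverse_eq_inv']
  have hLlog_apply : ∀ k, Llog (Pi.single k 1)
      = Lπ (Pi.single k 1) + (1 / 2) * (∑ i, ∑ j, (G x)⁻¹ i j * dG k i j)
        - (1 / 2) * (∑ i, ∑ j, v i * v j * dG k i j) := by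
    intro k
    rw [hLlogdef]
    simp only [ContinuousLinearMap.add_apply, ContinuousLinearMap.coe_smul', Pi.smul_apply,
      ContinuousLinearMap.coe_sum', Finset.sum_apply, smul_eq_mul, hdGval]
    have h1 : ((G x).det)⁻¹ * ∑ i, ∑ j, (G x).adjugate i j * dG k j i
        = ∑ i, ∑ j, (G x)⁻¹ i j * dG k i j := by
      rw [Finset.mul_sum]
      refine Finset.sum_congr rfl fun i _ => ?_
      rw [Finset.mul_sum]
      refine Finset.sum_congr rfl fun j _ => ?_
      rw [hinv, hdGsymm]
      ring
    rw [h1]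
    ring
  -- the triple-sum identity
  have hT : ∑ i, ∑ j, ∑ k, ((G x)⁻¹ i j - v i * v j) * dG k i j * v k
      = ∑ k, v k * ((∑ i, ∑ j, (G x)⁻¹ i j * dG k i j)
        - (∑ i, ∑ j, v i * v j * dG k i j)) := by
    rw [sum_comm3]
    refine Finset.sum_congr rfl fun k _ => ?_
    rw [← Finset.sum_sub_distrib]
    simp_rw [← Finset.sum_sub_distrib]
    rw [Finset.mul_sum]
    refine Finset.sum_congr rfl fun i _ => ?_
    rw [Finset.mul_sum]
    refine Finset.sum_congr rfl fun j _ => ?_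
    ring
  -- part (a)
  have ha : -(∑ k, v k * fderiv ℝ (fun y => Real.log (μ y v)) x (Pi.single k 1))
      = -(∑ k, v k * Lπ (Pi.single k 1))
        - (1 / 2) * ∑ i, ∑ j, ∑ k, ((G x)⁻¹ i j - v i * v j) * dG k i j * v k := by
    rw [hfd, hT]
    simp only [hLlog_apply]
    have hterm : ∀ k, v k * (Lπ (Pi.single k 1)
        + (1 / 2) * (∑ i, ∑ j, (G x)⁻¹ i j * dG k i j)
        - (1 / 2) * (∑ i, ∑ j, v i * v j * dG k i j))
        = v k * Lπ (Pi.single k 1)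
          + (1 / 2) * (v k * ((∑ i, ∑ j, (G x)⁻¹ i j * dG k i j)
            - (∑ i, ∑ j, v i * v j * dG k i j))) := fun k => by ring
    simp only [hterm]
    rw [Finset.sum_add_distrib, ← Finset.mul_sum]
    ring
  refine ⟨ha, ?_⟩
  -- part (b)
  have hμdiffAt : DifferentiableAt ℝ (fun y => μ y v) x := by
    have hfun : (fun y => μ y v) = fun y => π y * (2 * Real.pi) ^ (-(d : ℝ) / 2)
        * Real.sqrt ((G y).det) * Real.exp (-(v ⬝ᵥ G y *ᵥ v) / 2) := funext fun y => hμ y v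
    rw [hfun]
    have hneg : DifferentiableAt ℝ (fun y => -(v ⬝ᵥ G y *ᵥ v)) x := hq.differentiableAt.neg
    have hdiv : DifferentiableAt ℝ (fun y => -(v ⬝ᵥ G y *ᵥ v) / 2) x := by
      simpa [div_eq_mul_inv] using hneg.mul_const ((2:ℝ)⁻¹)
    have hexp : DifferentiableAt ℝ (fun y => Real.exp (-(v ⬝ᵥ G y *ᵥ v) / 2)) x :=
      DifferentiableAt.exp hdiv
    exact (((hπ.differentiable (by simp) x).mul_const _).mul
      (hdet.differentiableAt.sqrt hdet_pos.ne')).mul hexp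
  set M := fderiv ℝ (fun y => μ y v) x with hMdef
  have hM : HasFDerivAt (fun y => μ y v) M x := hμdiffAt.hasFDerivAt
  have huniq : (μ x v)⁻¹ • M = Llog := (hM.log (hμpos x).ne').unique hLlog
  have hmulk : ∀ k, fderiv ℝ (fun y => μ y v * v k) x (Pi.single k 1)
      = v k * M (Pi.single k 1) := by
    intro k
    rw [(hM.mul_const (v k)).fderiv]
    simp [mul_comm]
  have hMLlog : ∀ k, (μ x v)⁻¹ * M (Pi.single k 1) = Llog (Pi.single k 1) := by
    intro k
    rw [← huniq]
    simp
  have hb : -(μ x v)⁻¹ * (∑ k, fderiv ℝ (fun y => μ y v * v k) x (Pi.single k 1))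
      = -(∑ k, v k * fderiv ℝ (fun y => Real.log (μ y v)) x (Pi.single k 1)) := by
    simp only [hmulk, hfd]
    rw [neg_mul, neg_inj, Finset.mul_sum]
    refine Finset.sum_congr rfl fun k _ => ?_
    rw [← hMLlog k]
    ring
  rw [hb, ha, hρL]
  ring
end

section
/- Let H be a real symmetric d×d matrix with spectral decomposition H = QDQᵀ (Q orthogonal, D diagonal with entries λ_i), and define SoftAbs_α(H) = Q·f(D)·Qᵀ where f(λ) = λ·coth(αλ) for λ≠0 and f(0)=1/α. Then SoftAbs_α(H) is symmetric positive definite, and its eigenvalues satisfy f(λ) ≥ max(|λ|, 1/α) for all real λ. -/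
open Matrix

/-- `sinh t ≤ t * cosh t` for `t ≥ 0`. -/
lemma sinh_le_mul_cosh {t : ℝ} (ht : 0 ≤ t) : Real.sinh t ≤ t * Real.cosh t := by
  have hmono : MonotoneOn (fun t : ℝ => t * Real.cosh t - Real.sinh t) (Set.Ici 0) := by
    apply monotoneOn_of_deriv_nonneg (convex_Ici 0)
    · exact (Continuous.sub (continuous_id.mul Real.continuous_cosh)
        Real.continuous_sinh).continuousOn
    · intro x _
      exact (((differentiableAt_id.mul Real.differentiable_cosh.differentiableAt).sub
        Real.differentiable_sinh.differentiableAt)).differentiableWithinAt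
    · intro x hx
      have hx' : 0 < x := by simpa using hx
      have hd : deriv (fun t : ℝ => t * Real.cosh t - Real.sinh t) x = x * Real.sinh x := by
        have h1 : HasDerivAt (fun t : ℝ => t * Real.cosh t - Real.sinh t)
            (1 * Real.cosh x + x * Real.sinh x - Real.cosh x) x := by
          exact ((hasDerivAt_id x).mul (Real.hasDerivAt_cosh x)).sub (Real.hasDerivAt_sinh x)
        rw [h1.deriv]; ring
      rw [hd]
      exact mul_nonneg hx'.le (Real.sinh_nonneg_iff.mpr hx'.le)
  have h0 : (0 : ℝ) * Real.cosh 0 - Real.sinh 0 ≤ t * Real.cosh t - Real.sinh t :=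
    hmono (Set.self_mem_Ici) ht ht
  simp at h0
  linarith

/-- The key scalar bound for positive arguments. -/
lemma softabs_bound_pos {α l : ℝ} (hα : 0 < α) (hl : 0 < l) :
    max |l| (1 / α) ≤ l * (Real.cosh (α * l) / Real.sinh (α * l)) := by
  set t := α * l with ht
  have htpos : 0 < t := mul_pos hα hl
  have hsinh : 0 < Real.sinh t := Real.sinh_pos_iff.mpr htpos
  have hcs : Real.sinh t ≤ Real.cosh t := (Real.sinh_lt_cosh t).le
  have h1 : |l| ≤ l * (Real.cosh t / Real.sinh t) := by
    rw [abs_of_pos hl]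
    have : 1 ≤ Real.cosh t / Real.sinh t := (one_le_div hsinh).mpr hcs
    nlinarith
  have h2 : 1 / α ≤ l * (Real.cosh t / Real.sinh t) := by
    have key : Real.sinh t ≤ t * Real.cosh t := sinh_le_mul_cosh htpos.le
    have h3 : l * (Real.cosh t / Real.sinh t) * α = t * Real.cosh t / Real.sinh t := by
      rw [ht]; field_simp
    rw [div_le_iff₀ hα, h3, le_div_iff₀ hsinh]
    linarith
  exact max_le h1 h2

lemma softabs_bound {α : ℝ} (hα : 0 < α) (f : ℝ → ℝ)
    (hf : ∀ l : ℝ, f l = if l = 0 then 1 / α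
        else l * (Real.cosh (α * l) / Real.sinh (α * l))) :
    ∀ l : ℝ, max |l| (1 / α) ≤ f l := by
  intro l
  rcases lt_trichotomy l 0 with hl | hl | hl
  · rw [hf l, if_neg hl.ne]
    have : l * (Real.cosh (α * l) / Real.sinh (α * l))
        = (-l) * (Real.cosh (α * (-l)) / Real.sinh (α * (-l))) := by
      rw [mul_neg, Real.cosh_neg, Real.sinh_neg]
      ring
    rw [this]
    have := softabs_bound_pos hα (neg_pos.mpr hl) (α := α)
    simpa [abs_neg] using this
  · subst hl
    rw [hf 0, if_pos rfl]
    simp only [abs_zero]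
    exact max_le (by positivity) le_rfl
  · rw [hf l, if_neg hl.ne']
    exact softabs_bound_pos hα hl

/-- The SoftAbs metric: if `H = Q D Qᵀ` is a real symmetric matrix (`Q`
orthogonal, `D = diag(ev)`), and `SoftAbs_α(H) = Q f(D) Qᵀ` where
`f(λ) = λ coth(αλ)` for `λ ≠ 0` and `f(0) = 1/α`, then `SoftAbs_α(H)` is
symmetric positive definite and `f(λ) ≥ max |λ| (1/α)` for all real `λ`. -/
theorem stmt15 (d : ℕ) (α : ℝ) (hα : 0 < α)
    (H Q : Matrix (Fin d) (Fin d) ℝ) (hHsymm : H.IsSymm)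
    (hQ : Qᵀ * Q = 1) (ev : Fin d → ℝ)
    (hH : H = Q * Matrix.diagonal ev * Qᵀ)
    (f : ℝ → ℝ)
    (hf : ∀ l : ℝ, f l = if l = 0 then 1 / α
        else l * (Real.cosh (α * l) / Real.sinh (α * l)))
    (S : Matrix (Fin d) (Fin d) ℝ)
    (hS : S = Q * Matrix.diagonal (fun i => f (ev i)) * Qᵀ) :
    S.IsSymm ∧ S.PosDef ∧ ∀ l : ℝ, max |l| (1 / α) ≤ f l := by
  have hbound := softabs_bound hα f hf
  have hfpos : ∀ i, 0 < f (ev i) := fun i =>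
    lt_of_lt_of_le (lt_of_lt_of_le (by positivity : (0:ℝ) < 1/α) (le_max_right _ _)) (hbound (ev i))
  have hQQt : Q * Qᵀ = 1 := by
    rw [mul_eq_one_comm] at hQ
    exact hQ
  have hDpos : (Matrix.diagonal (fun i => f (ev i))).PosDef := Matrix.PosDef.diagonal hfpos
  have hSsymm : S.IsSymm := by
    show Sᵀ = S
    rw [hS, Matrix.transpose_mul, Matrix.transpose_mul, Matrix.transpose_transpose,
      Matrix.diagonal_transpose, Matrix.mul_assoc]
  refine ⟨hSsymm, ?_, hbound⟩
  refine Matrix.PosDef.of_dotProduct_mulVec_pos ?_ ?_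
  · show Sᴴ = S
    rw [Matrix.conjTranspose_eq_transpose_of_trivial]
    exact hSsymm
  · intro x hx
    have hQx : Qᵀ *ᵥ x ≠ 0 := by
      intro h
      apply hx
      have : Q *ᵥ (Qᵀ *ᵥ x) = 0 := by rw [h, Matrix.mulVec_zero]
      rwa [Matrix.mulVec_mulVec, hQQt, Matrix.one_mulVec] at this
    have := hDpos.dotProduct_mulVec_pos hQx
    have heq : star x ⬝ᵥ S *ᵥ x
        = star (Qᵀ *ᵥ x) ⬝ᵥ (Matrix.diagonal (fun i => f (ev i))) *ᵥ (Qᵀ *ᵥ x) := by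
      simp only [star_trivial, hS, Matrix.mul_assoc, ← Matrix.mulVec_mulVec,
        Matrix.dotProduct_mulVec, Matrix.mulVec_transpose]
    rw [heq]
    exact this
end
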